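/- arXiv:1704.02472 — 9 statements merged into one kernel-verified Lean document; each statement's English description precedes it below -/
import Mathlib

section
/- For every finite group G, the difference size satisfies (1 + √(4|G| − 3))/2 ≤ Δ[G] ≤ ⌈(|G| + 1)/2⌉. -/
/-- A finset `B` is a difference basis of the group `G` if every element of `G`
can be written as `a * b⁻¹` with `a b ∈ B`. -/
def IsDiffBasis {G : Type*} [Group G] (B : Finset G) : Prop :=
  ∀ g : G, ∃ a ∈ B, ∃ b ∈ B, g = a * b⁻¹

/-- The difference size `Δ[G]` of a group `G`: the smallest cardinality of a difference basis. -/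
noncomputable def diffSize (G : Type*) [Group G] : ℕ :=
  sInf {k | ∃ B : Finset G, B.card = k ∧ IsDiffBasis B}

/-- The difference characteristic `ð[G] = Δ[G]/√|G|`. -/
noncomputable def diffChar (G : Type*) [Group G] : ℝ :=
  (diffSize G : ℝ) / Real.sqrt (Nat.card G)

/-!
Lower bound: a difference basis `B` has at most `|B|² - |B|` ordered pairs of distinct elements,
and these must produce every `g ≠ 1` as `a * b⁻¹`, so `|G| - 1 ≤ |B|² - |B|`; solving the quadratic
gives the bound. Upper bound: if `2|B| > |G|`, then for every `g` the sets `B` and `g • B` meet by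
pigeonhole, and a common element `a = g * b` exhibits `g = a * b⁻¹`.
-/

open Finset Pointwise

section DiffBasis

variable {G : Type*} [Group G]

theorem IsDiffBasis.nonempty {B : Finset G} (hB : IsDiffBasis B) : B.Nonempty :=
  let ⟨a, ha, _⟩ := hB 1
  ⟨a, ha⟩

theorem isDiffBasis_univ [Fintype G] : IsDiffBasis (univ : Finset G) :=
  fun g => ⟨g, mem_univ _, 1, mem_univ _, by simp⟩

theorem isDiffBasis_of_card_lt_two_mul [Fintype G] {B : Finset G}
    (hB : Fintype.card G < 2 * #B) : IsDiffBasis B := by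
  classical
  intro g
  have hmeet : (B ∩ g • B).Nonempty :=
    inter_nonempty_of_card_lt_card_add_card (subset_univ B) (subset_univ (g • B))
      (by rwa [card_smul_finset, card_univ, ← two_mul])
  obtain ⟨a, ha⟩ := hmeet
  obtain ⟨haB, hag⟩ := mem_inter.1 ha
  obtain ⟨b, hbB, rfl⟩ := mem_smul_finset.1 hag
  exact ⟨g • b, haB, b, hbB, by simp⟩

theorem IsDiffBasis.card_add_le [Fintype G] {B : Finset G} (hB : IsDiffBasis B) :
    Fintype.card G + #B ≤ #B * #B + 1 := by
  classical
  have hsurj :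
      Set.SurjOn (fun p : G × G => p.1 * p.2⁻¹) B.offDiag (univ.erase (1 : G) : Set G) := by
    intro g hg
    obtain ⟨a, ha, b, hb, rfl⟩ := hB g
    refine ⟨(a, b), mem_offDiag.2 ⟨ha, hb, fun hab => ?_⟩, rfl⟩
    exact mem_erase.1 hg |>.1 (by simp [show a = b from hab])
  have hcard := card_le_card_of_surjOn _ hsurj
  rw [card_erase_of_mem (mem_univ _), card_univ, offDiag_card] at hcard
  have := Nat.le_mul_self #B
  have := Fintype.card_pos (α := G)
  omega

theorem diffSize_le_card {B : Finset G} (hB : IsDiffBasis B) : diffSize G ≤ #B :=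
  Nat.sInf_le ⟨B, rfl, hB⟩

theorem exists_isDiffBasis_card_eq_diffSize [Fintype G] :
    ∃ B : Finset G, IsDiffBasis B ∧ #B = diffSize G := by
  obtain ⟨B, hcard, hB⟩ := Nat.sInf_mem (s := {k | ∃ B : Finset G, #B = k ∧ IsDiffBasis B})
    ⟨_, univ, rfl, isDiffBasis_univ⟩
  exact ⟨B, hB, hcard⟩

theorem diffSize_le_of_lt_two_mul [Fintype G] {m : ℕ} (hm : m ≤ Fintype.card G)
    (hlt : Fintype.card G < 2 * m) : diffSize G ≤ m := by
  obtain ⟨B, -, hBcard⟩ := exists_subset_card_eq (s := (univ : Finset G)) (n := m)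
    (by rwa [card_univ])
  exact hBcard ▸ diffSize_le_card (isDiffBasis_of_card_lt_two_mul (hBcard ▸ hlt))

theorem card_add_diffSize_le [Fintype G] :
    Fintype.card G + diffSize G ≤ diffSize G * diffSize G + 1 := by
  obtain ⟨B, hB, hcard⟩ := exists_isDiffBasis_card_eq_diffSize (G := G)
  exact hcard ▸ hB.card_add_le

theorem one_le_diffSize [Fintype G] : 1 ≤ diffSize G := by
  obtain ⟨B, hB, hcard⟩ := exists_isDiffBasis_card_eq_diffSize (G := G)
  exact hcard ▸ hB.nonempty.card_pos

end DiffBasis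

theorem one_add_sqrt_div_two_le {n k : ℝ} (hk : 1 / 2 ≤ k) (h : n + k ≤ k * k + 1) :
    (1 + √(4 * n - 3)) / 2 ≤ k := by
  have : √(4 * n - 3) ≤ 2 * k - 1 :=
    Real.sqrt_le_iff.2 ⟨by linarith, by nlinarith⟩
  linarith

theorem lt_two_mul_ceil_succ_div_two (n : ℕ) : n < 2 * ⌈((n : ℚ) + 1) / 2⌉₊ := by
  have := Nat.le_ceil (((n : ℚ) + 1) / 2)
  exact_mod_cast (by linarith : (n : ℚ) < 2 * ⌈((n : ℚ) + 1) / 2⌉₊)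

theorem ceil_succ_div_two_le {n : ℕ} (hn : 1 ≤ n) : ⌈((n : ℚ) + 1) / 2⌉₊ ≤ n := by
  have : (1 : ℚ) ≤ n := by exact_mod_cast hn
  exact Nat.ceil_le.2 (by linarith)

theorem stmt0 (G : Type*) [Group G] [Finite G] :
    (1 + Real.sqrt (4 * (Nat.card G : ℝ) - 3)) / 2 ≤ (diffSize G : ℝ) ∧
    diffSize G ≤ ⌈((Nat.card G : ℚ) + 1) / 2⌉₊ := by
  have := Fintype.ofFinite G
  rw [Nat.card_eq_fintype_card]
  constructor
  · have hk : (1 : ℝ) ≤ diffSize G := by exact_mod_cast one_le_diffSize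
    exact one_add_sqrt_div_two_le (by linarith) (by exact_mod_cast card_add_diffSize_le)
  · exact diffSize_le_of_lt_two_mul (ceil_succ_div_two_le Fintype.card_pos)
      (lt_two_mul_ceil_succ_div_two _)
end

section
/- For every finite group G and every normal subgroup H of G, the difference sizes satisfy Δ[G] ≤ Δ[H]·Δ[G/H]. -/
lemma exists_min_basis (K : Type*) [Group K] [Finite K] :
    ∃ B : Finset K, B.card = diffSize K ∧ IsDiffBasis B := by
  have : Fintype K := Fintype.ofFinite K
  have hne : {k | ∃ B : Finset K, B.card = k ∧ IsDiffBasis B}.Nonempty := by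
    refine ⟨(Finset.univ : Finset K).card, Finset.univ, rfl, ?_⟩
    intro g
    exact ⟨g, Finset.mem_univ g, 1, Finset.mem_univ 1, by group⟩
  have := Nat.sInf_mem hne
  exact this

theorem stmt1 (G : Type*) [Group G] [Finite G] (H : Subgroup G) [H.Normal] :
    diffSize G ≤ diffSize H * diffSize (G ⧸ H) := by
  obtain ⟨BH, hBHcard, hBH⟩ := exists_min_basis H
  obtain ⟨BQ, hBQcard, hBQ⟩ := exists_min_basis (G ⧸ H)
  classical
  let s : G ⧸ H → G := Quotient.out
  let B : Finset G := (BH ×ˢ BQ).image (fun p => s p.2 * (p.1 : G))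
  have hbasis : IsDiffBasis B := by
    intro g
    obtain ⟨a, ha, b, hb, hab⟩ := hBQ (QuotientGroup.mk g : G ⧸ H)
    have hmem : (s a)⁻¹ * g * (s b) ∈ H := by
      rw [← QuotientGroup.eq_one_iff]
      have h1 : (QuotientGroup.mk (s a) : G ⧸ H) = a := Quotient.out_eq a
      have h2 : (QuotientGroup.mk (s b) : G ⧸ H) = b := Quotient.out_eq b
      have : (QuotientGroup.mk ((s a)⁻¹ * g * (s b)) : G ⧸ H)
          = (QuotientGroup.mk (s a))⁻¹ * QuotientGroup.mk g * QuotientGroup.mk (s b) := by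
        simp [QuotientGroup.mk_mul, QuotientGroup.mk_inv]
      rw [this, h1, h2, hab]
      group
    obtain ⟨h1, hh1, h2, hh2, hh⟩ := hBH ⟨_, hmem⟩
    refine ⟨s a * h1, Finset.mem_image.2 ⟨⟨h1, a⟩, Finset.mem_product.2 ⟨hh1, ha⟩, rfl⟩,
      s b * h2, Finset.mem_image.2 ⟨⟨h2, b⟩, Finset.mem_product.2 ⟨hh2, hb⟩, rfl⟩, ?_⟩
    have hval : (s a)⁻¹ * g * (s b) = (h1 : G) * (h2 : G)⁻¹ := by
      have := congrArg (Subtype.val) hh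
      simpa using this
    have : g = s a * ((s a)⁻¹ * g * (s b)) * (s b)⁻¹ := by group
    rw [this, hval]
    group
  calc diffSize G ≤ B.card := Nat.sInf_le ⟨B, rfl, hbasis⟩
    _ ≤ (BH ×ˢ BQ).card := Finset.card_image_le
    _ = diffSize H * diffSize (G ⧸ H) := by
        rw [Finset.card_product, hBHcard, hBQcard]
end

section
/- For every finite group G and every subgroup H of G, the difference size satisfies Δ[G] ≤ |H| + [G : H] − 1, where [G : H] denotes the index of H in G. -/
theorem stmt2 (G : Type*) [Group G] [Finite G] (H : Subgroup G) :
    diffSize G ≤ Nat.card H + H.index - 1 := by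
  classical
  haveI : Fintype G := Fintype.ofFinite G
  set f : G ⧸ H → G := fun q => if q = ((1:G) : G ⧸ H) then 1 else q.out with hf
  have hfq : ∀ q : G ⧸ H, (f q : G ⧸ H) = q := by
    intro q
    by_cases h : q = ((1:G) : G ⧸ H)
    · simp [hf, h]
    · simp [hf, h, QuotientGroup.out_eq']
  set T : Finset G := Finset.univ.image f with hT
  set HF : Finset G := (H : Set G).toFinset with hHF
  set B : Finset G := T ∪ HF with hB
  have hbasis : IsDiffBasis B := by
    intro g
    refine ⟨f (g : G ⧸ H), Finset.mem_union_left _ (Finset.mem_image_of_mem _ (Finset.mem_univ _)),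
      g⁻¹ * f (g : G ⧸ H), Finset.mem_union_right _ ?_, ?_⟩
    · rw [hHF, Set.mem_toFinset]
      have : ((f (g : G ⧸ H)) : G ⧸ H) = (g : G ⧸ H) := hfq _
      have h2 : (f (g : G ⧸ H))⁻¹ * g ∈ H := (QuotientGroup.eq).mp this
      have := H.inv_mem h2
      simpa [mul_inv_rev] using this
    · group
  have h1T : (1 : G) ∈ T := by
    rw [hT, Finset.mem_image]
    exact ⟨((1:G) : G ⧸ H), Finset.mem_univ _, by simp [hf]⟩
  have h1H : (1 : G) ∈ HF := by rw [hHF, Set.mem_toFinset]; exact H.one_mem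
  have hinter : 1 ≤ (T ∩ HF).card :=
    Finset.card_pos.mpr ⟨1, Finset.mem_inter.mpr ⟨h1T, h1H⟩⟩
  have hTcard : T.card ≤ H.index := by
    calc T.card ≤ Fintype.card (G ⧸ H) := Finset.card_image_le.trans (by simp)
    _ = H.index := by rw [Subgroup.index, Nat.card_eq_fintype_card]
  have hHcard : HF.card = Nat.card H := by
    rw [hHF, Set.toFinset_card, Nat.card_eq_fintype_card]
    rfl
  have hcard : B.card ≤ Nat.card H + H.index - 1 := by
    rw [hB]
    have h2 := Finset.card_union_add_card_inter T HF
    omega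
  calc diffSize G ≤ B.card := Nat.sInf_le ⟨B, rfl, hbasis⟩
  _ ≤ _ := hcard
end

section
/- For all positive integers n and m, the dihedral group D_{2nm} of order 2nm satisfies 2√(nm) ≤ Δ[D_{2nm}] ≤ Δ[D_{2n}]·Δ[C_m], and consequently √2 ≤ ð[D_{2nm}] ≤ ð[D_{2n}]·ð[C_m]. -/
/-- In a finite group, some difference basis realizes the difference size. -/
lemma diffSize_exists (G : Type*) [Group G] [Fintype G] [DecidableEq G] :
    ∃ B : Finset G, B.card = diffSize G ∧ IsDiffBasis B := by
  have hne : {k | ∃ B : Finset G, B.card = k ∧ IsDiffBasis B}.Nonempty :=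
    ⟨(Finset.univ : Finset G).card, Finset.univ, rfl,
      fun g => ⟨g, Finset.mem_univ _, 1, Finset.mem_univ _, by simp⟩⟩
  obtain ⟨B, h1, h2⟩ := Nat.sInf_mem hne
  exact ⟨B, h1, h2⟩

lemma diffSize_le {G : Type*} [Group G] (S : Finset G) (hS : IsDiffBasis S) :
    diffSize G ≤ S.card :=
  Nat.sInf_le ⟨S, rfl, hS⟩

open DihedralGroup Finset in
/-- Lower bound: a difference basis of `D_{2N}` has at least `2√N` elements. -/
lemma lower_aux (N : ℕ) [NeZero N] (B : Finset (DihedralGroup N)) (hB : IsDiffBasis B) :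
    4 * N ≤ B.card ^ 2 := by
  classical
  have invr : ∀ j : ZMod N, (r j)⁻¹ = r (-j) := fun _ => rfl
  have invsr : ∀ j : ZMod N, (sr j)⁻¹ = sr j := fun _ => rfl
  set S0 : Finset (ZMod N) := Finset.univ.filter (fun i => r i ∈ B) with hS0
  set S1 : Finset (ZMod N) := Finset.univ.filter (fun i => sr i ∈ B) with hS1
  have hrinj : Function.Injective (r (n := N)) := fun a b h => by
    simpa using h
  have hsrinj : Function.Injective (sr (n := N)) := fun a b h => by
    simpa using h
  have hcard : B.card = S0.card + S1.card := by
    have hB' : B = S0.image r ∪ S1.image sr := by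
      ext x
      cases x <;> simp [hS0, hS1]
    rw [hB', card_union_of_disjoint, card_image_of_injective _ hrinj,
      card_image_of_injective _ hsrinj]
    rw [disjoint_left]
    rintro a ha hb
    obtain ⟨i, -, rfl⟩ := mem_image.mp ha
    obtain ⟨j, -, h⟩ := mem_image.mp hb
    exact absurd h (by simp)
  have hNs : N ≤ S1.card * S0.card := by
    have hsub : (Finset.univ : Finset (ZMod N)) ⊆
        (S1 ×ˢ S0).image (fun p => p.1 - p.2) := by
      intro k _
      obtain ⟨a, ha, b, hb, hab⟩ := hB (sr k)
      rcases a with i | i <;> rcases b with j | j <;>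
        simp only [invr, invsr, r_mul_r, r_mul_sr, sr_mul_r, sr_mul_sr] at hab
      · exact absurd hab (by simp)
      · refine mem_image.mpr ⟨(j, i), mem_product.mpr ⟨?_, ?_⟩, ?_⟩
        · simp [hS1, hb]
        · simp [hS0, ha]
        · simpa using hab.symm
      · refine mem_image.mpr ⟨(i, j), mem_product.mpr ⟨?_, ?_⟩, ?_⟩
        · simp [hS1, ha]
        · simp [hS0, hb]
        · simp at hab
          rw [hab]; ring
      · exact absurd hab (by simp)
    calc N = (Finset.univ : Finset (ZMod N)).card := by simp [ZMod.card]
    _ ≤ ((S1 ×ˢ S0).image (fun p => p.1 - p.2)).card := card_le_card hsub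
    _ ≤ (S1 ×ˢ S0).card := card_image_le
    _ = S1.card * S0.card := by rw [card_product]
  rw [hcard]
  zify
  zify at hNs
  nlinarith [sq_nonneg ((S0.card : ℤ) - S1.card)]

/-- Kernel elements of `ZMod (n*m) → ZMod n` are (scaled) differences of elements of `C`. -/
lemma key_aux (n m : ℕ) (hn : 0 < n) (hm : 0 < m)
    (C : Finset (Multiplicative (ZMod m))) (hC : IsDiffBasis C)
    (w : ZMod (n * m)) (hw : ZMod.castHom ⟨m, rfl⟩ (ZMod n) w = 0) :
    ∃ c1 ∈ C, ∃ c2 ∈ C, (n : ZMod (n * m)) *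
      (((Multiplicative.toAdd c1).val : ZMod (n * m)) -
       ((Multiplicative.toAdd c2).val : ZMod (n * m))) = w := by
  haveI : NeZero n := ⟨hn.ne'⟩
  haveI : NeZero m := ⟨hm.ne'⟩
  haveI : NeZero (n * m) := ⟨by positivity⟩
  have hdvd : n ∣ w.val := by
    have h' : ((w.val : ℕ) : ZMod n) = 0 := by
      have := hw
      rw [ZMod.castHom_apply, ← ZMod.natCast_val] at this
      exact this
    exact (ZMod.natCast_eq_zero_iff _ _).mp h'
  obtain ⟨u, hu⟩ := hdvd
  obtain ⟨c1, hc1, c2, hc2, hcc⟩ := hC (Multiplicative.ofAdd (u : ZMod m))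
  refine ⟨c1, hc1, c2, hc2, ?_⟩
  set a1 := (Multiplicative.toAdd c1).val with ha1
  set a2 := (Multiplicative.toAdd c2).val with ha2
  have hmod : (m : ℤ) ∣ ((a1 : ℤ) - a2 - u : ℤ) := by
    have h1 : (((a1 : ℤ) - a2 - u : ℤ) : ZMod m) = 0 := by
      push_cast
      rw [ZMod.natCast_val, ZMod.natCast_val, ZMod.cast_id, ZMod.cast_id]
      have := congrArg Multiplicative.toAdd hcc
      simp only [toAdd_ofAdd, toAdd_mul, toAdd_inv] at this
      rw [this]; ring
    rwa [ZMod.intCast_zmod_eq_zero_iff_dvd] at h1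
  have hweq : w = ((n * u : ℕ) : ZMod (n * m)) := by
    rw [← hu, ZMod.natCast_val, ZMod.cast_id]
  rw [hweq]
  have : (n * m : ℤ) ∣ (n : ℤ) * ((a1 : ℤ) - a2 - u) := by
    obtain ⟨t, ht⟩ := hmod
    exact ⟨t, by rw [ht]; ring⟩
  have h0 : (((n : ℤ) * ((a1 : ℤ) - a2 - u) : ℤ) : ZMod (n * m)) = 0 := by
    rw [ZMod.intCast_zmod_eq_zero_iff_dvd]
    exact_mod_cast this
  push_cast at h0
  push_cast
  linear_combination h0

/-- Embedding (as a function) of `DihedralGroup n` into `DihedralGroup (n*m)`. -/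
def emb (n m : ℕ) : DihedralGroup n → DihedralGroup (n * m)
  | .r i => .r ((i.val : ZMod (n * m)))
  | .sr i => .sr ((i.val : ZMod (n * m)))

def cv (n m : ℕ) (c : Multiplicative (ZMod m)) : ZMod (n * m) :=
  ((Multiplicative.toAdd c).val : ZMod (n * m))

@[simp] lemma emb_r (n m : ℕ) (i : ZMod n) : emb n m (.r i) = .r ((i.val : ZMod (n * m))) := rfl
@[simp] lemma emb_sr (n m : ℕ) (i : ZMod n) : emb n m (.sr i) = .sr ((i.val : ZMod (n * m))) := rfl

open DihedralGroup Finset in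
/-- Upper bound construction: combining difference bases of `D_{2n}` and `C_m`. -/
lemma upper_aux (n m : ℕ) (hn : 0 < n) (hm : 0 < m)
    (B : Finset (DihedralGroup n)) (hB : IsDiffBasis B)
    (C : Finset (Multiplicative (ZMod m))) (hC : IsDiffBasis C) :
    ∃ S : Finset (DihedralGroup (n * m)), S.card ≤ B.card * C.card ∧ IsDiffBasis S := by
  classical
  haveI : NeZero n := ⟨hn.ne'⟩
  haveI : NeZero m := ⟨hm.ne'⟩
  haveI : NeZero (n * m) := ⟨by positivity⟩
  set N := n * m with hN
  have invr : ∀ j : ZMod N, (r j)⁻¹ = r (-j) := fun _ => rfl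
  have invsr : ∀ j : ZMod N, (sr j)⁻¹ = sr j := fun _ => rfl
  have invr' : ∀ j : ZMod n, (r j)⁻¹ = r (-j) := fun _ => rfl
  have invsr' : ∀ j : ZMod n, (sr j)⁻¹ = sr j := fun _ => rfl
  set π : ZMod N →+* ZMod n := ZMod.castHom ⟨m, rfl⟩ (ZMod n) with hπ
  have hback : ∀ i : ZMod n, π ((i.val : ZMod N)) = i := by
    intro i
    rw [map_natCast, ZMod.natCast_val, ZMod.cast_id]
  set S : Finset (DihedralGroup N) :=
    (B ×ˢ C).image (fun p => emb n m p.1 * .r ((n : ZMod N) * cv n m p.2)) with hS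
  have hmemS : ∀ a ∈ B, ∀ c ∈ C, emb n m a * .r ((n : ZMod N) * cv n m c) ∈ S := by
    intro a ha c hc
    exact mem_image.mpr ⟨(a, c), mem_product.mpr ⟨ha, hc⟩, rfl⟩
  refine ⟨S, le_trans card_image_le (by rw [card_product]), ?_⟩
  intro g
  cases g with
  | r k =>
    obtain ⟨a, ha, b, hb, hab⟩ := hB (.r (π k))
    rcases a with i | i <;> rcases b with j | j <;>
      simp only [invr', invsr', r_mul_r, r_mul_sr, sr_mul_r, sr_mul_sr,
        DihedralGroup.r.injEq] at hab
    · have hw : π (k - (((i.val : ZMod N)) - ((j.val : ZMod N)))) = 0 := by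
        rw [map_sub, map_sub, hback, hback, hab]; ring
      obtain ⟨c1, hc1, c2, hc2, hcc⟩ := key_aux n m hn hm C hC _ hw
      refine ⟨emb n m (.r i) * .r ((n : ZMod N) * cv n m c1), hmemS _ ha _ hc1,
        emb n m (.r j) * .r ((n : ZMod N) * cv n m c2), hmemS _ hb _ hc2, ?_⟩
      simp only [emb_r, r_mul_r, invr, DihedralGroup.r.injEq]
      simp only [cv] at hcc ⊢
      linear_combination -hcc
    · exact absurd hab (by simp)
    · exact absurd hab (by simp)
    · have hw : π (k - (((j.val : ZMod N)) - ((i.val : ZMod N)))) = 0 := by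
        rw [map_sub, map_sub, hback, hback, hab]; ring
      obtain ⟨c1, hc1, c2, hc2, hcc⟩ := key_aux n m hn hm C hC _ hw
      refine ⟨emb n m (.sr i) * .r ((n : ZMod N) * cv n m c2), hmemS _ ha _ hc2,
        emb n m (.sr j) * .r ((n : ZMod N) * cv n m c1), hmemS _ hb _ hc1, ?_⟩
      simp only [emb_sr, sr_mul_r, invsr, sr_mul_sr, DihedralGroup.r.injEq]
      simp only [cv] at hcc ⊢
      linear_combination -hcc
  | sr k =>
    obtain ⟨a, ha, b, hb, hab⟩ := hB (.sr (π k))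
    rcases a with i | i <;> rcases b with j | j <;>
      simp only [invr', invsr', r_mul_r, r_mul_sr, sr_mul_r, sr_mul_sr,
        DihedralGroup.sr.injEq] at hab
    · exact absurd hab (by simp)
    · have hw : π (k - (((j.val : ZMod N)) - ((i.val : ZMod N)))) = 0 := by
        rw [map_sub, map_sub, hback, hback, hab]; ring
      obtain ⟨c1, hc1, c2, hc2, hcc⟩ := key_aux n m hn hm C hC _ hw
      refine ⟨emb n m (.r i) * .r ((n : ZMod N) * cv n m c2), hmemS _ ha _ hc2,
        emb n m (.sr j) * .r ((n : ZMod N) * cv n m c1), hmemS _ hb _ hc1, ?_⟩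
      simp only [emb_r, emb_sr, r_mul_r, sr_mul_r, invsr, r_mul_sr, DihedralGroup.sr.injEq]
      simp only [cv] at hcc ⊢
      linear_combination -hcc
    · have hw : π (k - (((i.val : ZMod N)) - ((j.val : ZMod N)))) = 0 := by
        rw [map_sub, map_sub, hback, hback, hab]; ring
      obtain ⟨c1, hc1, c2, hc2, hcc⟩ := key_aux n m hn hm C hC _ hw
      refine ⟨emb n m (.sr i) * .r ((n : ZMod N) * cv n m c1), hmemS _ ha _ hc1,
        emb n m (.r j) * .r ((n : ZMod N) * cv n m c2), hmemS _ hb _ hc2, ?_⟩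
      simp only [emb_r, emb_sr, sr_mul_r, r_mul_r, invr, DihedralGroup.sr.injEq]
      simp only [cv] at hcc ⊢
      linear_combination -hcc
    · exact absurd hab (by simp)

theorem stmt4 (n m : ℕ) (hn : 0 < n) (hm : 0 < m) :
    2 * Real.sqrt ((n : ℝ) * m) ≤ (diffSize (DihedralGroup (n * m)) : ℝ) ∧
    diffSize (DihedralGroup (n * m)) ≤
      diffSize (DihedralGroup n) * diffSize (Multiplicative (ZMod m)) ∧
    Real.sqrt 2 ≤ diffChar (DihedralGroup (n * m)) ∧
    diffChar (DihedralGroup (n * m)) ≤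
      diffChar (DihedralGroup n) * diffChar (Multiplicative (ZMod m)) := by
  classical
  haveI : NeZero n := ⟨hn.ne'⟩
  haveI : NeZero m := ⟨hm.ne'⟩
  haveI : NeZero (n * m) := ⟨by positivity⟩
  have hn' : (0 : ℝ) < n := by exact_mod_cast hn
  have hm' : (0 : ℝ) < m := by exact_mod_cast hm
  obtain ⟨BG, hBGcard, hBG⟩ := diffSize_exists (DihedralGroup (n * m))
  obtain ⟨B, hBcard, hBb⟩ := diffSize_exists (DihedralGroup n)
  obtain ⟨C, hCcard, hCb⟩ := diffSize_exists (Multiplicative (ZMod m))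
  -- Part 1
  have h4 : 4 * (n * m) ≤ (diffSize (DihedralGroup (n * m))) ^ 2 := by
    rw [← hBGcard]; exact lower_aux (n * m) BG hBG
  have part1 : 2 * Real.sqrt ((n : ℝ) * m) ≤ (diffSize (DihedralGroup (n * m)) : ℝ) := by
    have hsqrt4 : Real.sqrt 4 = 2 := by
      rw [show (4 : ℝ) = 2 ^ 2 by norm_num]
      exact Real.sqrt_sq (by norm_num)
    have heq : 2 * Real.sqrt ((n : ℝ) * m) = Real.sqrt (4 * ((n : ℝ) * m)) := by
      rw [Real.sqrt_mul (by norm_num : (0:ℝ) ≤ 4), hsqrt4]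
    rw [heq]
    have h4' : (4 * ((n : ℝ) * m)) ≤ ((diffSize (DihedralGroup (n * m)) : ℝ)) ^ 2 := by
      exact_mod_cast h4
    calc Real.sqrt (4 * ((n : ℝ) * m))
        ≤ Real.sqrt (((diffSize (DihedralGroup (n * m)) : ℝ)) ^ 2) := Real.sqrt_le_sqrt h4'
      _ = (diffSize (DihedralGroup (n * m)) : ℝ) := Real.sqrt_sq (Nat.cast_nonneg _)
  -- Part 2
  have part2 : diffSize (DihedralGroup (n * m)) ≤
      diffSize (DihedralGroup n) * diffSize (Multiplicative (ZMod m)) := by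
    obtain ⟨S, hScard, hSb⟩ := upper_aux n m hn hm B hBb C hCb
    calc diffSize (DihedralGroup (n * m)) ≤ S.card := diffSize_le S hSb
      _ ≤ B.card * C.card := hScard
      _ = diffSize (DihedralGroup n) * diffSize (Multiplicative (ZMod m)) := by
          rw [hBcard, hCcard]
  refine ⟨part1, part2, ?_, ?_⟩
  -- card computations
  · have hcardG : ((Nat.card (DihedralGroup (n * m)) : ℕ) : ℝ) = 2 * ((n : ℝ) * m) := by
      rw [Nat.card_eq_fintype_card, DihedralGroup.card]; push_cast; ring
    have hpos : (0 : ℝ) < Real.sqrt (2 * ((n : ℝ) * m)) :=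
      Real.sqrt_pos.mpr (by nlinarith)
    unfold diffChar
    rw [hcardG, le_div_iff₀ hpos]
    have hsqrt4 : Real.sqrt 4 = 2 := by
      rw [show (4 : ℝ) = 2 ^ 2 by norm_num]
      exact Real.sqrt_sq (by norm_num)
    have : Real.sqrt 2 * Real.sqrt (2 * ((n : ℝ) * m)) = 2 * Real.sqrt ((n : ℝ) * m) := by
      rw [← Real.sqrt_mul (by norm_num),
        show (2 : ℝ) * (2 * ((n : ℝ) * m)) = 4 * ((n : ℝ) * m) by ring,
        Real.sqrt_mul (by norm_num : (0:ℝ) ≤ 4), hsqrt4]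
    rw [this]
    exact part1
  · have hcardG : ((Nat.card (DihedralGroup (n * m)) : ℕ) : ℝ) = 2 * ((n : ℝ) * m) := by
      rw [Nat.card_eq_fintype_card, DihedralGroup.card]; push_cast; ring
    have hcard1 : ((Nat.card (DihedralGroup n) : ℕ) : ℝ) = 2 * (n : ℝ) := by
      rw [Nat.card_eq_fintype_card, DihedralGroup.card]; push_cast; ring
    have hcard2 : ((Nat.card (Multiplicative (ZMod m)) : ℕ) : ℝ) = (m : ℝ) := by
      rw [Nat.card_congr Multiplicative.toAdd, Nat.card_zmod]
    unfold diffChar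
    rw [hcardG, hcard1, hcard2, div_mul_div_comm]
    have hsplit : Real.sqrt (2 * (n : ℝ)) * Real.sqrt (m : ℝ) = Real.sqrt (2 * ((n : ℝ) * m)) := by
      rw [← Real.sqrt_mul (by positivity)]; ring_nf
    rw [hsplit]
    have hpos : (0 : ℝ) < Real.sqrt (2 * ((n : ℝ) * m)) :=
      Real.sqrt_pos.mpr (by nlinarith)
    have hle : (diffSize (DihedralGroup (n * m)) : ℝ) ≤
        (diffSize (DihedralGroup n) : ℝ) * (diffSize (Multiplicative (ZMod m)) : ℝ) := by
      exact_mod_cast part2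
    exact div_le_div_of_nonneg_right hle hpos.le
end

section
/- For every positive integer n with n ≠ 4, the cyclic group C_n of order n satisfies ð[C_n] ≤ √2, i.e., Δ[C_n] ≤ √2·√n. -/
def genSet (K m : ℕ) : Finset ℕ :=
  Finset.range K ∪ (Finset.Ico 1 m).image (fun i => i * K + (K - 1))

lemma genSet_card (K m : ℕ) : (genSet K m).card ≤ K + (m - 1) := by
  refine le_trans (Finset.card_union_le _ _) ?_
  have := Finset.card_image_le (s := Finset.Ico 1 m) (f := fun i => i * K + (K - 1))
  simp only [Finset.card_range, Nat.card_Ico] at *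
  omega

lemma genSet_direct (K m : ℕ) (hK : 0 < K) (t : ℕ) (ht : t < K * m) :
    ∃ a ∈ genSet K m, ∃ b ∈ genSet K m, a = t + b := by
  refine ⟨t / K * K + (K - 1), ?_, (K - 1) - t % K, ?_, ?_⟩
  · rcases Nat.eq_zero_or_pos (t / K) with hq | hq
    · rw [hq]
      exact Finset.mem_union_left _ (Finset.mem_range.2 (by omega))
    · refine Finset.mem_union_right _ (Finset.mem_image.2 ⟨t / K, ?_, rfl⟩)
      refine Finset.mem_Ico.2 ⟨hq, ?_⟩
      exact Nat.div_lt_of_lt_mul (by omega)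
  · exact Finset.mem_union_left _ (Finset.mem_range.2 (by omega))
  · have h1 : t % K < K := Nat.mod_lt _ hK
    have h2 : t / K * K + t % K = t := Nat.div_add_mod' t K
    omega

lemma genSet_cover (n K m : ℕ) (hn : 0 < n) (hK : 0 < K)
    (hcov : n / 2 + 1 ≤ K * m) :
    ∀ u < n, ∃ a ∈ genSet K m, ∃ b ∈ genSet K m, u + b ≡ a [MOD n] := by
  intro u hu
  rcases le_or_gt u (n / 2) with h | h
  · obtain ⟨a, ha, b, hb, hab⟩ := genSet_direct K m hK u (by omega)
    exact ⟨a, ha, b, hb, by rw [hab]⟩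
  · obtain ⟨a, ha, b, hb, hab⟩ := genSet_direct K m hK (n - u) (by omega)
    refine ⟨b, hb, a, ha, ?_⟩
    have : u + a = n + b := by omega
    calc u + a = n + b := this
      _ ≡ 0 + b [MOD n] := Nat.ModEq.add_right _ ((Nat.modEq_zero_iff_dvd).2 dvd_rfl)
      _ = b := by omega

def spSet (k : ℕ) : Finset ℕ :=
  Finset.range k ∪ (Finset.range k).image (fun i => 2 * k * i + (2 * k - 1))

lemma spSet_card (k : ℕ) : (spSet k).card ≤ 2 * k := by
  refine le_trans (Finset.card_union_le _ _) ?_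
  have := Finset.card_image_le (s := Finset.range k) (f := fun i => 2 * k * i + (2 * k - 1))
  simp only [Finset.card_range] at *
  omega

-- direct coverage: t < 2k^2 with t % (2k) = 0 or t % (2k) ≥ k ; or t < k
lemma spSet_direct (k : ℕ) (hk : 2 ≤ k) (t : ℕ) (ht : t < 2 * k * k)
    (hs : t < k ∨ t % (2 * k) = 0 ∨ k ≤ t % (2 * k)) :
    ∃ a ∈ spSet k, ∃ b ∈ spSet k, a = t + b := by
  have h2k : 0 < 2 * k := by omega
  rcases hs with h | h | h
  · exact ⟨t, Finset.mem_union_left _ (Finset.mem_range.2 h), 0,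
      Finset.mem_union_left _ (Finset.mem_range.2 (by omega)), by omega⟩
  · -- t = 2k * (t/(2k)), a = 2k*(t/2k) + (2k-1), b = 2k-1
    have hd : 2 * k * (t / (2 * k)) = t := by
      have := Nat.div_add_mod t (2 * k); omega
    refine ⟨2 * k * (t / (2 * k)) + (2 * k - 1), ?_, 2 * k - 1, ?_, by omega⟩
    · refine Finset.mem_union_right _ (Finset.mem_image.2 ⟨t / (2 * k), Finset.mem_range.2 ?_, rfl⟩)
      have : t / (2 * k) < k := Nat.div_lt_of_lt_mul (by omega)
      exact this
    · refine Finset.mem_union_right _ (Finset.mem_image.2 ⟨0, Finset.mem_range.2 (by omega), ?_⟩)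
      simp
  · -- t = 2k*i + s, k ≤ s ≤ 2k-1; a = 2k*i + 2k-1, b = 2k-1-s
    have hmod : t % (2 * k) < 2 * k := Nat.mod_lt _ h2k
    have hd : 2 * k * (t / (2 * k)) + t % (2 * k) = t := Nat.div_add_mod t (2 * k)
    refine ⟨2 * k * (t / (2 * k)) + (2 * k - 1), ?_, (2 * k - 1) - t % (2 * k), ?_, by omega⟩
    · refine Finset.mem_union_right _ (Finset.mem_image.2 ⟨t / (2 * k), Finset.mem_range.2 ?_, rfl⟩)
      exact Nat.div_lt_of_lt_mul (by omega)
    · exact Finset.mem_union_left _ (Finset.mem_range.2 (by omega))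

lemma spSet_cover (k : ℕ) (hk : 2 ≤ k) :
    ∀ u < 2 * k * (k + 1), ∃ a ∈ spSet k, ∃ b ∈ spSet k, u + b ≡ a [MOD 2 * k * (k + 1)] := by
  intro u hu
  set n := 2 * k * (k + 1) with hn
  have h2k : 0 < 2 * k := by omega
  have hna : n = 2 * k * k + 2 * k := by rw [hn]; ring
  have hkk : 2 * k * 2 ≤ 2 * k * k := Nat.mul_le_mul_left _ hk
  have hdm : 2 * k * (u / (2 * k)) + u % (2 * k) = u := Nat.div_add_mod u (2 * k)
  have hmod : u % (2 * k) < 2 * k := Nat.mod_lt _ h2k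
  by_cases hdir : u < 2 * k * k ∧ (u < k ∨ u % (2 * k) = 0 ∨ k ≤ u % (2 * k))
  · obtain ⟨a, ha, b, hb, hab⟩ := spSet_direct k hk u hdir.1 hdir.2
    exact ⟨a, ha, b, hb, by rw [hab]⟩
  · -- show v := n - u is directly coverable
    set v := n - u with hv
    have hvdir : v < 2 * k * k ∧ (v < k ∨ v % (2 * k) = 0 ∨ k ≤ v % (2 * k)) := by
      push_neg at hdir
      rcases le_or_gt (2 * k * k) u with hbig | hsmall
      · -- u ≥ 2k^2 : 1 ≤ v ≤ 2k
        have hu1 : 1 ≤ u := by omega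
        have hv2k : 1 ≤ v ∧ v ≤ 2 * k := by omega
        rcases lt_or_ge v k with h1 | h1
        · exact ⟨by omega, Or.inl h1⟩
        · rcases eq_or_lt_of_le (hv2k.2) with h2 | h2
          · refine ⟨by omega, Or.inr (Or.inl ?_)⟩
            rw [h2]
            simp
          · refine ⟨by omega, Or.inr (Or.inr ?_)⟩
            rw [Nat.mod_eq_of_lt (by omega)]
            exact h1
      · obtain ⟨huk, hs0, hsk⟩ := hdir hsmall
        have hs1 : 1 ≤ u % (2 * k) := Nat.pos_of_ne_zero hs0
        have hi1 : 1 ≤ u / (2 * k) := by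
          rcases Nat.eq_zero_or_pos (u / (2 * k)) with h0 | h0
          · have hcopy := hdm
            rw [h0, Nat.mul_zero] at hcopy
            omega
          · exact h0
        have hi2 : u / (2 * k) < k := Nat.div_lt_of_lt_mul (by omega)
        have hA : 2 * k * 1 ≤ 2 * k * (u / (2 * k)) := Nat.mul_le_mul_left _ hi1
        -- j := k - i - 1
        have hj : (k - u / (2 * k) - 1) + u / (2 * k) + 1 = k := by omega
        have hmul : 2 * k * ((k - u / (2 * k) - 1) + u / (2 * k) + 1)
            = 2 * k * (k - u / (2 * k) - 1) + 2 * k * (u / (2 * k)) + 2 * k := by ring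
        rw [hj] at hmul
        have hmul2 : 2 * k * ((k - u / (2 * k) - 1) + 1)
            = 2 * k * (k - u / (2 * k) - 1) + 2 * k := by ring
        have hveq : v = 2 * k * ((k - u / (2 * k) - 1) + 1) + (2 * k - u % (2 * k)) := by
          omega
        constructor
        · omega
        · refine Or.inr (Or.inr ?_)
          rw [hveq, Nat.mul_add_mod, Nat.mod_eq_of_lt (by omega)]
          omega
    obtain ⟨a, ha, b, hb, hab⟩ := spSet_direct k hk v hvdir.1 hvdir.2
    refine ⟨b, hb, a, ha, ?_⟩
    have heq : u + a = n + b := by omega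
    calc u + a = n + b := heq
      _ ≡ 0 + b [MOD n] := Nat.ModEq.add_right _ ((Nat.modEq_zero_iff_dvd).2 dvd_rfl)
      _ = b := by omega

lemma diffSize_le_of_cover (n : ℕ) (hn : 0 < n) (S : Finset ℕ)
    (h : ∀ u < n, ∃ a ∈ S, ∃ b ∈ S, u + b ≡ a [MOD n]) :
    diffSize (Multiplicative (ZMod n)) ≤ S.card := by
  haveI : NeZero n := ⟨hn.ne'⟩
  set B : Finset (Multiplicative (ZMod n)) :=
    S.image (fun s : ℕ => Multiplicative.ofAdd ((s : ℕ) : ZMod n)) with hBdef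
  have hB : IsDiffBasis B := by
    intro g
    obtain ⟨a, ha, b, hb, hab⟩ := h (Multiplicative.toAdd g).val (ZMod.val_lt _)
    refine ⟨Multiplicative.ofAdd (a : ZMod n), Finset.mem_image_of_mem _ ha,
      Multiplicative.ofAdd (b : ZMod n), Finset.mem_image_of_mem _ hb, ?_⟩
    have h2 : (((Multiplicative.toAdd g).val + b : ℕ) : ZMod n) = ((a : ℕ) : ZMod n) :=
      (ZMod.natCast_eq_natCast_iff _ _ _).2 hab
    push_cast at h2
    rw [ZMod.natCast_zmod_val] at h2
    have h3 : Multiplicative.toAdd g = (a : ZMod n) - (b : ZMod n) := by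
      rw [← h2]; ring
    have := congrArg Multiplicative.ofAdd h3
    simpa [sub_eq_add_neg, ofAdd_add, ofAdd_neg, div_eq_mul_inv] using this
  calc diffSize (Multiplicative (ZMod n)) ≤ B.card := Nat.sInf_le ⟨B, rfl, hB⟩
    _ ≤ S.card := Finset.card_image_le

lemma exists_cover (n : ℕ) (hn : 0 < n) (hn4 : n ≠ 4) :
    ∃ S : Finset ℕ, S.card * S.card ≤ 2 * n ∧
      ∀ u < n, ∃ a ∈ S, ∃ b ∈ S, u + b ≡ a [MOD n] := by
  set D := Nat.sqrt (2 * n) with hD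
  have hD1 : D * D ≤ 2 * n := Nat.sqrt_le _
  have hD2 : 2 * n < (D + 1) * (D + 1) := by
    have := Nat.lt_succ_sqrt' (2 * n)
    rwa [Nat.succ_eq_add_one, pow_two] at this
  rcases Nat.even_or_odd D with ⟨k, hk⟩ | ⟨k, hk⟩
  · -- D = 2k
    have hDk : D = 2 * k := by omega
    have hk0 : 0 < k := by
      rcases Nat.eq_zero_or_pos k with h0 | h0
      · exfalso; rw [hDk, h0] at hD2; omega
      · exact h0
    by_cases hsp : n = 2 * k * (k + 1)
    · have hk2 : 2 ≤ k := by
        rcases Nat.lt_or_ge k 2 with h2 | h2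
        · exfalso
          have hk1 : k = 1 := by omega
          rw [hk1] at hsp
          omega
        · exact h2
      refine ⟨spSet k, ?_, ?_⟩
      · have h1 := spSet_card k
        have h2 : 2 * k * (2 * k) ≤ 2 * n := by rw [hDk] at hD1; linarith [hD1]
        calc (spSet k).card * (spSet k).card ≤ 2 * k * (2 * k) :=
              Nat.mul_le_mul h1 h1
          _ ≤ 2 * n := h2
      · rw [hsp]; exact spSet_cover k hk2
    · have e1 : (D + 1) * (D + 1) = 4 * (k * k) + 4 * k + 1 := by rw [hDk]; ring
      have e2 : k * (k + 1) = k * k + k := by ring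
      have e3 : 2 * k * (k + 1) = 2 * (k * k) + 2 * k := by ring
      have hcov : n / 2 + 1 ≤ k * (k + 1) := by omega
      refine ⟨genSet k (k + 1), ?_, genSet_cover n k (k + 1) hn hk0 hcov⟩
      have h1 := genSet_card k (k + 1)
      have h1' : (genSet k (k + 1)).card ≤ D := by omega
      calc (genSet k (k + 1)).card * (genSet k (k + 1)).card ≤ D * D :=
            Nat.mul_le_mul h1' h1'
        _ ≤ 2 * n := hD1
  · -- D = 2k+1
    have hDk : D = 2 * k + 1 := by omega
    have e1 : (D + 1) * (D + 1) = 4 * (k * k) + 8 * k + 4 := by rw [hDk]; ring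
    have e2 : (k + 1) * (k + 1) = k * k + 2 * k + 1 := by ring
    have hcov : n / 2 + 1 ≤ (k + 1) * (k + 1) := by omega
    refine ⟨genSet (k + 1) (k + 1), ?_, genSet_cover n (k + 1) (k + 1) hn (by omega) hcov⟩
    have h1 := genSet_card (k + 1) (k + 1)
    have h1' : (genSet (k + 1) (k + 1)).card ≤ D := by omega
    calc (genSet (k + 1) (k + 1)).card * (genSet (k + 1) (k + 1)).card ≤ D * D :=
          Nat.mul_le_mul h1' h1'
      _ ≤ 2 * n := hD1

theorem stmt8 (n : ℕ) (hn : 0 < n) (hn4 : n ≠ 4) :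
    (diffSize (Multiplicative (ZMod n)) : ℝ) ≤ Real.sqrt 2 * Real.sqrt n := by
  obtain ⟨S, hcard, hcover⟩ := exists_cover n hn hn4
  have h1 : diffSize (Multiplicative (ZMod n)) ≤ S.card :=
    diffSize_le_of_cover n hn S hcover
  have h2 : ((S.card : ℝ)) ^ 2 ≤ 2 * (n : ℝ) := by
    have : ((S.card * S.card : ℕ) : ℝ) ≤ ((2 * n : ℕ) : ℝ) := by exact_mod_cast hcard
    push_cast at this
    nlinarith [this]
  have h3 : (S.card : ℝ) ≤ Real.sqrt (2 * (n : ℝ)) := by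
    have := Real.sqrt_le_sqrt h2
    rwa [Real.sqrt_sq (by positivity)] at this
  have h4 : Real.sqrt (2 * (n : ℝ)) = Real.sqrt 2 * Real.sqrt n :=
    Real.sqrt_mul (by norm_num) _
  calc (diffSize (Multiplicative (ZMod n)) : ℝ) ≤ (S.card : ℝ) := by exact_mod_cast h1
    _ ≤ Real.sqrt (2 * (n : ℝ)) := h3
    _ = Real.sqrt 2 * Real.sqrt n := h4
end

section
/- For every integer n ≥ 9, the cyclic group C_n of order n satisfies ð[C_n] ≤ 12/√73, i.e., Δ[C_n] ≤ (12/√73)·√n. -/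
set_option maxHeartbeats 1000000

open Finset

/-! ### Wichmann-type perfect difference rulers -/

def wichW (r s : ℕ) : Finset ℕ :=
  (Finset.range (r+1)) ∪
  ((Finset.range (r+1)).image fun j => (2*r+1)*(j+1)) ∪
  ((Finset.range s).image fun k => (2*r+1)*(r+1) + (4*r+3)*(k+1)) ∪
  ((Finset.range (r+1)).image fun l => (2*r+1)*(r+1) + (4*r+3)*s + (2*r+2)*(l+1)) ∪
  ((Finset.range r).image fun m => (2*r+1)*(r+1) + (4*r+3)*s + (2*r+2)*(r+1) + (m+1))

lemma wichW_card (r s : ℕ) : (wichW r s).card ≤ 4*r+s+3 := by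
  unfold wichW
  have u1 := card_union_le (Finset.range (r+1))
    ((Finset.range (r+1)).image fun j => (2*r+1)*(j+1))
  have u2 := card_union_le ((Finset.range (r+1)) ∪
    ((Finset.range (r+1)).image fun j => (2*r+1)*(j+1)))
    ((Finset.range s).image fun k => (2*r+1)*(r+1) + (4*r+3)*(k+1))
  have u3 := card_union_le ((Finset.range (r+1)) ∪
    ((Finset.range (r+1)).image fun j => (2*r+1)*(j+1)) ∪
    ((Finset.range s).image fun k => (2*r+1)*(r+1) + (4*r+3)*(k+1)))
    ((Finset.range (r+1)).image fun l => (2*r+1)*(r+1) + (4*r+3)*s + (2*r+2)*(l+1))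
  have u4 := card_union_le ((Finset.range (r+1)) ∪
    ((Finset.range (r+1)).image fun j => (2*r+1)*(j+1)) ∪
    ((Finset.range s).image fun k => (2*r+1)*(r+1) + (4*r+3)*(k+1)) ∪
    ((Finset.range (r+1)).image fun l => (2*r+1)*(r+1) + (4*r+3)*s + (2*r+2)*(l+1)))
    ((Finset.range r).image fun m => (2*r+1)*(r+1) + (4*r+3)*s + (2*r+2)*(r+1) + (m+1))
  have b1 : (Finset.range (r+1)).card = r+1 := by simp
  have b2 : ((Finset.range (r+1)).image fun j => (2*r+1)*(j+1)).card ≤ r+1 :=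
    le_trans card_image_le (by simp)
  have b3 : ((Finset.range s).image fun k => (2*r+1)*(r+1) + (4*r+3)*(k+1)).card ≤ s :=
    le_trans card_image_le (by simp)
  have b4 : ((Finset.range (r+1)).image fun l => (2*r+1)*(r+1) + (4*r+3)*s + (2*r+2)*(l+1)).card ≤ r+1 :=
    le_trans card_image_le (by simp)
  have b5 : ((Finset.range r).image fun m => (2*r+1)*(r+1) + (4*r+3)*s + (2*r+2)*(r+1) + (m+1)).card ≤ r :=
    le_trans card_image_le (by simp)
  omega

lemma memA {r s i : ℕ} (h : i ≤ r) : i ∈ wichW r s := by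
  unfold wichW
  simp only [mem_union, mem_image, mem_range]
  exact Or.inl (Or.inl (Or.inl (Or.inl (by omega))))

lemma memB {r s j : ℕ} (h1 : 1 ≤ j) (h2 : j ≤ r+1) : (2*r+1)*j ∈ wichW r s := by
  obtain ⟨j0, rfl⟩ : ∃ j0, j = j0 + 1 := ⟨j-1, by omega⟩
  unfold wichW
  simp only [mem_union, mem_image, mem_range]
  exact Or.inl (Or.inl (Or.inl (Or.inr ⟨j0, by omega, rfl⟩)))

lemma memC {r s k : ℕ} (h1 : 1 ≤ k) (h2 : k ≤ s) :
    (2*r+1)*(r+1) + (4*r+3)*k ∈ wichW r s := by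
  obtain ⟨k0, rfl⟩ : ∃ k0, k = k0 + 1 := ⟨k-1, by omega⟩
  unfold wichW
  simp only [mem_union, mem_image, mem_range]
  exact Or.inl (Or.inl (Or.inr ⟨k0, by omega, rfl⟩))

lemma memD {r s l : ℕ} (h1 : 1 ≤ l) (h2 : l ≤ r+1) :
    (2*r+1)*(r+1) + (4*r+3)*s + (2*r+2)*l ∈ wichW r s := by
  obtain ⟨l0, rfl⟩ : ∃ l0, l = l0 + 1 := ⟨l-1, by omega⟩
  unfold wichW
  simp only [mem_union, mem_image, mem_range]
  exact Or.inl (Or.inr ⟨l0, by omega, rfl⟩)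

lemma memE {r s m : ℕ} (h1 : 1 ≤ m) (h2 : m ≤ r) :
    (2*r+1)*(r+1) + (4*r+3)*s + (2*r+2)*(r+1) + m ∈ wichW r s := by
  obtain ⟨m0, rfl⟩ : ∃ m0, m = m0 + 1 := ⟨m-1, by omega⟩
  unfold wichW
  simp only [mem_union, mem_image, mem_range]
  exact Or.inr ⟨m0, by omega, rfl⟩

lemma region1 (r s d : ℕ) (hs : 1 ≤ s) (h1 : d ≤ (2*r+1)*(r+1)) :
    ∃ a ∈ wichW r s, ∃ b ∈ wichW r s, a = b + d := by
  obtain ⟨t, o, hdm, ho2⟩ : ∃ t o, (2*r+2)*t + o = d ∧ o < 2*r+2 :=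
    ⟨d/(2*r+2), d%(2*r+2), Nat.div_add_mod d (2*r+2), Nat.mod_lt _ (by omega)⟩
  have htr : t ≤ r := by
    by_contra hcon
    push_neg at hcon
    have h2 : (2*r+2)*(r+1) ≤ (2*r+2)*t := Nat.mul_le_mul_left _ hcon
    nlinarith
  have hdmz : (2*(r:ℤ)+2)*t + o = d := by exact_mod_cast hdm
  rcases le_or_gt o r with ho3 | ho3
  · -- R1a
    obtain ⟨τ, hτ1, hτ2⟩ : ∃ τ, τ + t = r+1 ∧ 1 ≤ τ := ⟨r+1-t, by omega, by omega⟩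
    have hτz : (τ:ℤ) + t = r+1 := by exact_mod_cast hτ1
    rcases Nat.eq_zero_or_pos o with ho4 | ho4
    · refine ⟨(2*r+1)*(r+1) + (4*r+3)*s + (2*r+2)*(r+1), memD (by omega) le_rfl,
        (2*r+1)*(r+1) + (4*r+3)*s + (2*r+2)*τ, memD hτ2 (by omega), ?_⟩
      have hoz : (o:ℤ) = 0 := by exact_mod_cast ho4
      zify
      linear_combination hdmz + (-2*(r:ℤ) + (-2:ℤ)) * hτz + (-1:ℤ) * hoz
    · refine ⟨(2*r+1)*(r+1) + (4*r+3)*s + (2*r+2)*(r+1) + o, memE ho4 ho3,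
        (2*r+1)*(r+1) + (4*r+3)*s + (2*r+2)*τ, memD hτ2 (by omega), ?_⟩
      zify
      linear_combination hdmz + (-2*(r:ℤ) + (-2:ℤ)) * hτz
  · rcases le_or_gt d ((2*r+1)*(t+1)) with hbc | hbc
    · -- R1b
      obtain ⟨i, hi⟩ := Nat.le.dest hbc
      have hiz : (d:ℤ) + i = (2*r+1)*(t+1) := by exact_mod_cast hi
      have haux : (i:ℤ) + o + t = 2*r+1 := by linear_combination hiz + hdmz
      refine ⟨(2*r+1)*(t+1), memB (by omega) (by omega), i, memA (by omega), ?_⟩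
      zify
      linear_combination (-1:ℤ) * hiz
    · -- R1c
      obtain ⟨c0, hc0⟩ := Nat.exists_eq_add_of_lt hbc
      obtain ⟨c, hc, hc1⟩ : ∃ c, (2*r+1)*(t+1) + c = d ∧ 1 ≤ c :=
        ⟨c0+1, by rw [hc0]; ring, by omega⟩
      have hcz : (2*(r:ℤ)+1)*(t+1) + c = d := by exact_mod_cast hc
      have hcaux : (c:ℤ) + 2*r + 1 = t + o := by linear_combination hcz - hdmz
      have hct : c ≤ t := by omega
      rcases (le_or_gt (2*c) (t+1)) with hg1 | hg1
      · rcases le_or_gt c s with hg2 | hg2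
        · -- R1ci
          obtain ⟨β, hβ1⟩ : ∃ β, β + t = r + 2*c := ⟨r + 2*c - t, by omega⟩
          have hbz : (β:ℤ) + t = r + 2*c := by exact_mod_cast hβ1
          refine ⟨(2*r+1)*(r+1) + (4*r+3)*c, memC (by omega) hg2,
            (2*r+1)*β, memB (by omega) (by omega), ?_⟩
          zify
          linear_combination hcz + (-2*(r:ℤ) + (-1:ℤ)) * hbz
        · -- R1ciii (2c ≤ t+1, c > s)
          obtain ⟨μ, hμ1⟩ : ∃ μ, μ + s = c := ⟨c - s, by omega⟩
          obtain ⟨β, hβ1⟩ : ∃ β, β + t = r + s + c := ⟨r + s + c - t, by omega⟩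
          have hmz : (μ:ℤ) + s = c := by exact_mod_cast hμ1
          have hbz : (β:ℤ) + t = (r:ℤ) + s + c := by exact_mod_cast hβ1
          refine ⟨(2*r+1)*(r+1) + (4*r+3)*s + (2*r+2)*μ, memD (by omega) (by omega),
            (2*r+1)*β, memB (by omega) (by omega), ?_⟩
          zify
          linear_combination hcz + (2*(r:ℤ) + (2:ℤ)) * hmz + (-2*(r:ℤ) + (-1:ℤ)) * hbz
      · rcases le_or_gt (t+2) (s+c) with hg2 | hg2
        · -- R1cii
          obtain ⟨lam, hl1⟩ : ∃ lam, lam + t + 1 = 2*c := ⟨2*c - t - 1, by omega⟩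
          obtain ⟨kb, hk1⟩ : ∃ kb, kb + t + 1 = s + c := ⟨s + c - t - 1, by omega⟩
          have hlz : (lam:ℤ) + t + 1 = 2*c := by exact_mod_cast hl1
          have hkz : (kb:ℤ) + t + 1 = (s:ℤ) + c := by exact_mod_cast hk1
          refine ⟨(2*r+1)*(r+1) + (4*r+3)*s + (2*r+2)*lam, memD (by omega) (by omega),
            (2*r+1)*(r+1) + (4*r+3)*kb, memC (by omega) (by omega), ?_⟩
          zify
          linear_combination hcz + (2*(r:ℤ) + (2:ℤ)) * hlz + (-4*(r:ℤ) + (-3:ℤ)) * hkz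
        · -- R1ciii (2c ≥ t+2, s+c ≤ t+1)
          obtain ⟨μ, hμ1⟩ : ∃ μ, μ + s = c := ⟨c - s, by omega⟩
          obtain ⟨β, hβ1⟩ : ∃ β, β + t = r + s + c := ⟨r + s + c - t, by omega⟩
          have hmz : (μ:ℤ) + s = c := by exact_mod_cast hμ1
          have hbz : (β:ℤ) + t = (r:ℤ) + s + c := by exact_mod_cast hβ1
          refine ⟨(2*r+1)*(r+1) + (4*r+3)*s + (2*r+2)*μ, memD (by omega) (by omega),
            (2*r+1)*β, memB (by omega) (by omega), ?_⟩
          zify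
          linear_combination hcz + (2*(r:ℤ) + (2:ℤ)) * hmz + (-2*(r:ℤ) + (-1:ℤ)) * hbz

lemma region3 (r s d : ℕ) (hs : 1 ≤ s) (h1 : (2*r+1)*(r+1) < d)
    (h2 : d ≤ (2*r+1)*(r+1) + (4*r+3)*s) :
    ∃ a ∈ wichW r s, ∃ b ∈ wichW r s, a = b + d := by
  obtain ⟨y, hyd⟩ := Nat.exists_eq_add_of_lt h1
  obtain ⟨k1, rem, hsp, hrem⟩ : ∃ k1 rem, (4*r+3)*k1 + rem = y ∧ rem < 4*r+3 :=
    ⟨y/(4*r+3), y%(4*r+3), Nat.div_add_mod y (4*r+3), Nat.mod_lt _ (by omega)⟩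
  have hydz : (d:ℤ) = (2*(r:ℤ)+1)*(r+1) + y + 1 := by exact_mod_cast hyd
  have hspz : (4*(r:ℤ)+3)*k1 + rem = y := by exact_mod_cast hsp
  have hyz : (2*(r:ℤ)+1)*((r:ℤ)+1)+1+(4*(r:ℤ)+3)*(k1:ℤ)+(rem:ℤ) = (d:ℤ) := by
    linear_combination hspz - hydz
  have hk1 : k1 + 1 ≤ s := by
    by_contra hcon
    push_neg at hcon
    have hmul : (4*r+3)*s ≤ (4*r+3)*k1 := Nat.mul_le_mul_left _ (by omega)
    nlinarith
  obtain ⟨dl, hdl⟩ : ∃ dl, k1 + 1 + dl = s := ⟨s - (k1+1), by omega⟩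
  have hdlz : (k1:ℤ) + 1 + dl = s := by exact_mod_cast hdl
  rcases le_or_gt (3*r+2) rem with hL1 | hL1
  · -- L1
    obtain ⟨u, hu⟩ : ∃ u, rem = 3*r+2+u := ⟨rem - (3*r+2), by omega⟩
    obtain ⟨i, hi⟩ : ∃ i, i + u = r := ⟨r - u, by omega⟩
    have huz : (rem:ℤ) = 3*r+2+u := by exact_mod_cast hu
    have hiz : (i:ℤ) + u = r := by exact_mod_cast hi
    refine ⟨(2*r+1)*(r+1) + (4*r+3)*(k1+1), memC (by omega) (by omega),
      i, memA (by omega), ?_⟩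
    zify
    linear_combination hyz + (-1:ℤ) * huz + (-1:ℤ) * hiz
  rcases le_or_gt (5*r+3) (2*rem) with hL2 | hL2
  · -- L2
    obtain ⟨ap, hap⟩ : ∃ ap, ap + rem = 3*r+1 := ⟨3*r+1 - rem, by omega⟩
    obtain ⟨l, hl, hl1⟩ : ∃ l, l + 2*ap = r ∧ 1 ≤ l := ⟨r - 2*ap, by omega, by omega⟩
    have hapz : (ap:ℤ) + rem = 3*r+1 := by exact_mod_cast hap
    have hlz : (l:ℤ) + 2*ap = r := by exact_mod_cast hl
    rcases le_or_gt (ap+1) dl with hsub | hsub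
    · -- L2a
      obtain ⟨c, hc, hc1⟩ : ∃ c, ap + c = dl ∧ 1 ≤ c := ⟨dl - ap, by omega, by omega⟩
      have hcz : (ap:ℤ) + c = dl := by exact_mod_cast hc
      refine ⟨(2*r+1)*(r+1) + (4*r+3)*s + (2*r+2)*l, memD hl1 (by omega),
        (2*r+1)*(r+1) + (4*r+3)*c, memC hc1 (by omega), ?_⟩
      zify
      linear_combination hyz + (-4*(r:ℤ) + (-3:ℤ)) * hdlz + (-1:ℤ) * hapz
        + (2*(r:ℤ) + (2:ℤ)) * hlz + (-4*(r:ℤ) + (-3:ℤ)) * hcz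
    · -- L2b
      obtain ⟨g, hg⟩ : ∃ g, g + dl = ap := ⟨ap - dl, by omega⟩
      obtain ⟨bb, hb, hb1⟩ : ∃ bb, bb + g = r+1 ∧ 1 ≤ bb := ⟨r+1-g, by omega, by omega⟩
      have hgz : (g:ℤ) + dl = ap := by exact_mod_cast hg
      have hbz : (bb:ℤ) + g = r+1 := by exact_mod_cast hb
      refine ⟨(2*r+1)*(r+1) + (4*r+3)*s + (2*r+2)*(l+g), memD (by omega) (by omega),
        (2*r+1)*bb, memB hb1 (by omega), ?_⟩
      zify
      linear_combination hyz + (-4*(r:ℤ) + (-3:ℤ)) * hdlz + (-1:ℤ) * hapz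
        + (2*(r:ℤ) + (2:ℤ)) * hlz + (4*(r:ℤ) + (3:ℤ)) * hgz + (-2*(r:ℤ) + (-1:ℤ)) * hbz
  rcases le_or_gt (2*r+1) rem with hL3 | hL3
  · -- L3
    obtain ⟨nu, hnu⟩ : ∃ nu, rem = 2*r+1+nu := ⟨rem - (2*r+1), by omega⟩
    have hnz : (rem:ℤ) = 2*(r:ℤ)+1+nu := by exact_mod_cast hnu
    rcases le_or_gt nu dl with hsub | hsub
    · -- L3a
      refine ⟨(2*r+1)*(r+1) + (4*r+3)*(k1+1+nu), memC (by omega) (by omega),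
        (2*r+1)*(2*nu+1), memB (by omega) (by omega), ?_⟩
      zify
      linear_combination hyz + (-1:ℤ) * hnz
    · -- L3b
      obtain ⟨g3, hg3, hg31⟩ : ∃ g3, dl + g3 = nu ∧ 1 ≤ g3 := ⟨nu - dl, by omega, by omega⟩
      have hgz : (dl:ℤ) + g3 = nu := by exact_mod_cast hg3
      refine ⟨(2*r+1)*(r+1) + (4*r+3)*s + (2*r+2)*g3, memD hg31 (by omega),
        (2*r+1)*(nu+dl+1), memB (by omega) (by omega), ?_⟩
      zify
      linear_combination hyz + (-4*(r:ℤ) + (-3:ℤ)) * hdlz + (-1:ℤ) * hnz + (2*(r:ℤ) + (2:ℤ)) * hgz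
  rcases le_or_gt (r+1) rem with hL4 | hL4
  · -- L4
    obtain ⟨m, hm, hm1⟩ : ∃ m, rem = r + m ∧ 1 ≤ m := ⟨rem - r, by omega, by omega⟩
    have hmz : (rem:ℤ) = (r:ℤ) + m := by exact_mod_cast hm
    refine ⟨(2*r+1)*(r+1) + (4*r+3)*s + (2*r+2)*(r+1) + m, memE hm1 (by omega),
      (2*r+1)*(r+1) + (4*r+3)*(dl+1), memC (by omega) (by omega), ?_⟩
    zify
    linear_combination hyz + (-4*(r:ℤ) + (-3:ℤ)) * hdlz + (-1:ℤ) * hmz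
  rcases le_or_gt r (2*rem) with hL5 | hL5
  · -- L5
    obtain ⟨app, hap⟩ : ∃ app, app + rem = r := ⟨r - rem, by omega⟩
    obtain ⟨l, hl, hl1⟩ : ∃ l, l + 2*app = r+1 ∧ 1 ≤ l := ⟨r+1-2*app, by omega, by omega⟩
    have hapz : (app:ℤ) + rem = r := by exact_mod_cast hap
    have hlz : (l:ℤ) + 2*app = r+1 := by exact_mod_cast hl
    rcases le_or_gt app dl with hsub | hsub
    · -- L5a
      obtain ⟨c5, hc5, hc51⟩ : ∃ c5, app + c5 = dl + 1 ∧ 1 ≤ c5 := ⟨dl+1-app, by omega, by omega⟩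
      have hcz : (app:ℤ) + c5 = (dl:ℤ) + 1 := by exact_mod_cast hc5
      refine ⟨(2*r+1)*(r+1) + (4*r+3)*s + (2*r+2)*l, memD hl1 (by omega),
        (2*r+1)*(r+1) + (4*r+3)*c5, memC hc51 (by omega), ?_⟩
      zify
      linear_combination hyz + (-4*(r:ℤ) + (-3:ℤ)) * hdlz + (-1:ℤ) * hapz
        + (2*(r:ℤ) + (2:ℤ)) * hlz + (-4*(r:ℤ) + (-3:ℤ)) * hcz
    · -- L5b
      obtain ⟨g5, hg5⟩ : ∃ g5, g5 + dl + 1 = app := ⟨app - dl - 1, by omega⟩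
      obtain ⟨bb, hb, hb1⟩ : ∃ bb, bb + g5 = r+1 ∧ 1 ≤ bb := ⟨r+1-g5, by omega, by omega⟩
      have hgz : (g5:ℤ) + dl + 1 = app := by exact_mod_cast hg5
      have hbz : (bb:ℤ) + g5 = r+1 := by exact_mod_cast hb
      refine ⟨(2*r+1)*(r+1) + (4*r+3)*s + (2*r+2)*(l+g5), memD (by omega) (by omega),
        (2*r+1)*bb, memB hb1 (by omega), ?_⟩
      zify
      linear_combination hyz + (-4*(r:ℤ) + (-3:ℤ)) * hdlz + (-1:ℤ) * hapz
        + (2*(r:ℤ) + (2:ℤ)) * hlz + (4*(r:ℤ) + (3:ℤ)) * hgz + (-2*(r:ℤ) + (-1:ℤ)) * hbz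
  · -- L6
    rcases le_or_gt rem dl with hsub | hsub
    · -- L6a
      refine ⟨(2*r+1)*(r+1) + (4*r+3)*(k1+1+rem), memC (by omega) (by omega),
        (2*r+1)*(2*rem+2), memB (by omega) (by omega), ?_⟩
      zify
      linear_combination hyz
    · -- L6b
      obtain ⟨g6, hg6, hg61⟩ : ∃ g6, dl + g6 = rem ∧ 1 ≤ g6 := ⟨rem - dl, by omega, by omega⟩
      have hgz : (dl:ℤ) + g6 = rem := by exact_mod_cast hg6
      refine ⟨(2*r+1)*(r+1) + (4*r+3)*s + (2*r+2)*g6, memD hg61 (by omega),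
        (2*r+1)*(rem+dl+2), memB (by omega) (by omega), ?_⟩
      zify
      linear_combination hyz + (-4*(r:ℤ) + (-3:ℤ)) * hdlz + (2*(r:ℤ) + (2:ℤ)) * hgz

lemma region4 (r s d : ℕ) (hs : 1 ≤ s)
    (h2 : (2*r+1)*(r+1) + (4*r+3)*s < d)
    (hdL : d ≤ 4*r*r+4*r*s+8*r+3*s+3) :
    ∃ a ∈ wichW r s, ∃ b ∈ wichW r s, a = b + d := by
  obtain ⟨x0, hx0⟩ := Nat.exists_eq_add_of_lt h2
  obtain ⟨x, hx, hx1⟩ : ∃ x, d = (2*r+1)*(r+1) + (4*r+3)*s + x ∧ 1 ≤ x :=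
    ⟨x0+1, by rw [hx0]; ring, by omega⟩
  obtain ⟨l2, cc, hsp, hcc⟩ : ∃ l2 cc, (2*r+2)*l2 + cc = x ∧ cc < 2*r+2 :=
    ⟨x/(2*r+2), x%(2*r+2), Nat.div_add_mod x (2*r+2), Nat.mod_lt _ (by omega)⟩
  have hxz : (d:ℤ) = (2*(r:ℤ)+1)*(r+1) + (4*(r:ℤ)+3)*s + x := by exact_mod_cast hx
  have hspz : (2*(r:ℤ)+2)*l2 + cc = x := by exact_mod_cast hsp
  have hl2 : l2 ≤ r+1 := by
    by_contra hcon
    push_neg at hcon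
    have hmul : (2*r+2)*(r+2) ≤ (2*r+2)*l2 := Nat.mul_le_mul_left _ hcon
    nlinarith
  rcases Nat.eq_zero_or_pos cc with hc0 | hc0
  · -- R4a
    have hl21 : 1 ≤ l2 := by
      rcases Nat.eq_zero_or_pos l2 with h | h
      · subst h; simp at hsp; omega
      · exact h
    have hcz : (cc:ℤ) = 0 := by exact_mod_cast hc0
    refine ⟨(2*r+1)*(r+1) + (4*r+3)*s + (2*r+2)*l2, memD hl21 hl2, 0, memA (by omega), ?_⟩
    zify
    linear_combination (-1:ℤ) * hxz + hspz + (-1:ℤ) * hcz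
  rcases le_or_gt cc (r+1) with hcr | hcr
  · rcases le_or_gt (l2+cc) (r+1) with hsum | hsum
    · -- R4b1
      refine ⟨(2*r+1)*(r+1) + (4*r+3)*s + (2*r+2)*(l2+cc), memD (by omega) hsum,
        (2*r+1)*cc, memB hc0 hcr, ?_⟩
      zify
      linear_combination (-1:ℤ) * hxz + hspz
    · rcases le_or_gt l2 r with hl2r | hl2r
      · -- R4b2
        obtain ⟨m, hm, hm1⟩ : ∃ m, m + r + 1 = cc + l2 ∧ 1 ≤ m := ⟨cc+l2-r-1, by omega, by omega⟩
        obtain ⟨j, hj, hj1⟩ : ∃ j, j + l2 = r+1 ∧ 1 ≤ j := ⟨r+1-l2, by omega, by omega⟩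
        have hmz : (m:ℤ) + r + 1 = (cc:ℤ) + l2 := by exact_mod_cast hm
        have hjz : (j:ℤ) + l2 = r+1 := by exact_mod_cast hj
        refine ⟨(2*r+1)*(r+1) + (4*r+3)*s + (2*r+2)*(r+1) + m, memE hm1 (by omega),
          (2*r+1)*j, memB hj1 (by omega), ?_⟩
        zify
        linear_combination (-1:ℤ) * hxz + hspz + hmz + (-2*(r:ℤ) + (-1:ℤ)) * hjz
      · -- R4b3 : l2 = r+1
        have hl2e : l2 = r+1 := by omega
        have hlz : (l2:ℤ) = r+1 := by exact_mod_cast hl2e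
        have hmul3 : (2*r+2)*l2 = (2*r+2)*(r+1) := by rw [hl2e]
        have hccr : cc ≤ r := by nlinarith
        refine ⟨(2*r+1)*(r+1) + (4*r+3)*s + (2*r+2)*(r+1) + cc, memE hc0 hccr,
          0, memA (by omega), ?_⟩
        zify
        linear_combination (-1:ℤ) * hxz + hspz + (-2*(r:ℤ) + (-2:ℤ)) * hlz
  · -- R4c
    obtain ⟨i4, hi4, hi41⟩ : ∃ i4, i4 + cc = 2*r+2 ∧ 1 ≤ i4 := ⟨2*r+2-cc, by omega, by omega⟩
    have hl2r : l2 ≤ r := by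
      by_contra hcon
      push_neg at hcon
      have hl2e : l2 = r+1 := by omega
      have hmul3 : (2*r+2)*l2 = (2*r+2)*(r+1) := by rw [hl2e]
      nlinarith
    have hiz : (i4:ℤ) + cc = 2*(r:ℤ)+2 := by exact_mod_cast hi4
    refine ⟨(2*r+1)*(r+1) + (4*r+3)*s + (2*r+2)*(l2+1), memD (by omega) (by omega),
      i4, memA (by omega), ?_⟩
    zify
    linear_combination (-1:ℤ) * hxz + hspz + (-1:ℤ) * hiz


lemma wich_cover (r s d : ℕ) (hs : 1 ≤ s) (hdL : d ≤ 4*r*r+4*r*s+8*r+3*s+3) :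
    ∃ a ∈ wichW r s, ∃ b ∈ wichW r s, a = b + d := by
  rcases le_or_gt d ((2*r+1)*(r+1)) with h | h
  · exact region1 r s d hs h
  · rcases le_or_gt d ((2*r+1)*(r+1)+(4*r+3)*s) with h2 | h2
    · exact region3 r s d hs h h2
    · exact region4 r s d hs h2 hdL

lemma ruler_bound (n : ℕ) (hn : 1 ≤ n) (D : Finset ℕ) (L : ℕ)
    (hcov : ∀ d, d ≤ L → ∃ a ∈ D, ∃ b ∈ D, a = b + d)
    (hnL : n ≤ 2*L+1) :
    diffSize (Multiplicative (ZMod n)) ≤ D.card := by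
  haveI : NeZero n := ⟨by omega⟩
  set B : Finset (Multiplicative (ZMod n)) :=
    D.image (fun a => Multiplicative.ofAdd ((a : ℕ) : ZMod n)) with hB
  have hbasis : IsDiffBasis B := by
    intro g
    have hval : (Multiplicative.toAdd g).val < n := ZMod.val_lt _
    have hback : (((Multiplicative.toAdd g).val : ℕ) : ZMod n) = Multiplicative.toAdd g := by
      rw [ZMod.natCast_val, ZMod.cast_id]
    rcases le_or_gt (Multiplicative.toAdd g).val L with hxL | hxL
    · obtain ⟨a, ha, b, hb, hab⟩ := hcov _ hxL
      refine ⟨Multiplicative.ofAdd ((a:ℕ) : ZMod n), mem_image_of_mem _ ha,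
        Multiplicative.ofAdd ((b:ℕ) : ZMod n), mem_image_of_mem _ hb, ?_⟩
      have : ((a:ℕ) : ZMod n) - ((b:ℕ) : ZMod n) = Multiplicative.toAdd g := by
        rw [← hback, hab]
        push_cast
        ring
      calc g = Multiplicative.ofAdd (Multiplicative.toAdd g) := rfl
        _ = Multiplicative.ofAdd (((a:ℕ) : ZMod n) - ((b:ℕ) : ZMod n)) := by rw [this]
        _ = Multiplicative.ofAdd ((a:ℕ) : ZMod n) * (Multiplicative.ofAdd ((b:ℕ) : ZMod n))⁻¹ := by
            rw [ofAdd_sub, div_eq_mul_inv]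
    · have hy : n - (Multiplicative.toAdd g).val ≤ L := by omega
      obtain ⟨a, ha, b, hb, hab⟩ := hcov _ hy
      refine ⟨Multiplicative.ofAdd ((b:ℕ) : ZMod n), mem_image_of_mem _ hb,
        Multiplicative.ofAdd ((a:ℕ) : ZMod n), mem_image_of_mem _ ha, ?_⟩
      have hsum : ((Multiplicative.toAdd g).val : ℕ) + (n - (Multiplicative.toAdd g).val) = n := by
        omega
      have : ((b:ℕ) : ZMod n) - ((a:ℕ) : ZMod n) = Multiplicative.toAdd g := by
        have h1 : ((a:ℕ) : ZMod n) = ((b:ℕ) : ZMod n) + ((n - (Multiplicative.toAdd g).val : ℕ) : ZMod n) := by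
          rw [hab]; push_cast; ring
        have h2 : ((n - (Multiplicative.toAdd g).val : ℕ) : ZMod n)
            = - (((Multiplicative.toAdd g).val : ℕ) : ZMod n) := by
          have : (((Multiplicative.toAdd g).val : ℕ) : ZMod n)
              + ((n - (Multiplicative.toAdd g).val : ℕ) : ZMod n) = ((n:ℕ) : ZMod n) := by
            rw [← Nat.cast_add, hsum]
          rw [ZMod.natCast_self] at this
          linear_combination this
        rw [h1, h2, hback]
        ring
      calc g = Multiplicative.ofAdd (Multiplicative.toAdd g) := rfl
        _ = Multiplicative.ofAdd (((b:ℕ) : ZMod n) - ((a:ℕ) : ZMod n)) := by rw [this]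
        _ = Multiplicative.ofAdd ((b:ℕ) : ZMod n) * (Multiplicative.ofAdd ((a:ℕ) : ZMod n))⁻¹ := by
            rw [ofAdd_sub, div_eq_mul_inv]
  have hmem : B.card ∈ {k | ∃ B' : Finset (Multiplicative (ZMod n)), B'.card = k ∧ IsDiffBasis B'} :=
    ⟨B, rfl, hbasis⟩
  exact le_trans (Nat.sInf_le hmem) card_image_le

lemma real_step (n k : ℕ) (hk : diffSize (Multiplicative (ZMod n)) ≤ k)
    (h : 73 * k^2 ≤ 144 * n) :
    (diffSize (Multiplicative (ZMod n)) : ℝ) ≤ 12 / Real.sqrt 73 * Real.sqrt n := by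
  have h73 : (0:ℝ) < Real.sqrt 73 := Real.sqrt_pos.mpr (by norm_num)
  have hsq : Real.sqrt (73 * (k:ℝ)^2) ≤ Real.sqrt (144 * (n:ℝ)) := by
    apply Real.sqrt_le_sqrt
    exact_mod_cast h
  have e1 : Real.sqrt (73 * (k:ℝ)^2) = Real.sqrt 73 * k := by
    rw [show (73 * (k:ℝ)^2) = (Real.sqrt 73 * k)^2 by
      rw [mul_pow, Real.sq_sqrt (by norm_num : (73:ℝ) ≥ 0)]]
    exact Real.sqrt_sq (by positivity)
  have e2 : Real.sqrt (144 * (n:ℝ)) = 12 * Real.sqrt n := by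
    rw [show (144 * (n:ℝ)) = (12 * Real.sqrt n)^2 by
      rw [mul_pow, Real.sq_sqrt (by positivity : (n:ℝ) ≥ 0)]; norm_num]
    exact Real.sqrt_sq (by positivity)
  rw [e1, e2] at hsq
  have hkr : (k:ℝ) ≤ 12 / Real.sqrt 73 * Real.sqrt n := by
    rw [div_mul_eq_mul_div, le_div_iff₀ h73]
    linarith [hsq]
  calc (diffSize (Multiplicative (ZMod n)) : ℝ) ≤ (k:ℝ) := by exact_mod_cast hk
    _ ≤ _ := hkr


lemma poly_r1 (n : ℕ) (h44 : 44 ≤ n) (h99 : n ≤ 99) :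
    73*(n+24*(1*1)+40*1+16)^2 ≤ 144*n*(8*1+6)^2 := by
  obtain ⟨a, ha⟩ := Nat.le.dest h44
  subst ha
  have hab : a ≤ 55 := by omega
  nlinarith [hab]

lemma F0_nonneg (r : ℤ) (hr : 2 ≤ r) :
    0 ≤ 55127*r^4+59440*r^3-101664*r^2-93440*r-18688 := by
  have h1 : (0:ℤ) ≤ r := by linarith
  have h2 : 2*r ≤ r*r := by nlinarith
  have h3 : 2*(r*r) ≤ r*r*r := by nlinarith
  have h4 : 2*(r*r*r) ≤ r*r*r*r := by nlinarith
  nlinarith [h2, h3, h4]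

lemma poly_r2 (r n : ℤ) (hr : 2 ≤ r) (hx : 25*(r*r) ≤ n) (hX : n ≤ 25*(r*r)+50*r+24) :
    73*(n+24*(r*r)+40*r+16)^2 ≤ 144*n*(8*r+6)^2 := by
  have hF0 := F0_nonneg r hr
  have hFX : (0:ℤ) ≤ 55127*r^4+162540*r^3+164524*r^2+65376*r+7616 := by positivity
  have h1 : (0:ℤ) ≤ (25*(r*r)+50*r+24-n)*(55127*r^4+59440*r^3-101664*r^2-93440*r-18688) :=
    mul_nonneg (by linarith) hF0
  have h2 : (0:ℤ) ≤ (n-25*(r*r))*(55127*r^4+162540*r^3+164524*r^2+65376*r+7616) :=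
    mul_nonneg (by linarith) hFX
  have h3 : (0:ℤ) ≤ 73*(50*r+24)*(n-25*(r*r))*(25*(r*r)+50*r+24-n) := by
    apply mul_nonneg
    apply mul_nonneg
    apply mul_nonneg
    · norm_num
    · linarith
    · linarith
    · linarith
  have hid : (50*r+24)*(144*n*(8*r+6)^2) =
      (50*r+24)*(73*(n+24*(r*r)+40*r+16)^2)
      + (25*(r*r)+50*r+24-n)*(55127*r^4+59440*r^3-101664*r^2-93440*r-18688)
      + (n-25*(r*r))*(55127*r^4+162540*r^3+164524*r^2+65376*r+7616)
      + 73*(50*r+24)*(n-25*(r*r))*(25*(r*r)+50*r+24-n) := by ring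
  have hmono : (50*r+24)*(73*(n+24*(r*r)+40*r+16)^2) ≤ (50*r+24)*(144*n*(8*r+6)^2) := by
    linarith
  exact le_of_mul_le_mul_left hmono (by linarith)

lemma select (n : ℕ) (hn : 44 ≤ n) :
    ∃ r s, 1 ≤ s ∧ n ≤ 8*r*r+8*r*s+16*r+6*s+7 ∧ 73*(4*r+s+3)^2 ≤ 144*n := by
  obtain ⟨t, ht1, ht2⟩ : ∃ t, t*t ≤ n ∧ n < (t+1)*(t+1) :=
    ⟨Nat.sqrt n, by simpa [pow_two] using Nat.sqrt_le' n,
      by simpa [pow_two] using Nat.lt_succ_sqrt' n⟩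
  obtain ⟨r, hr1, hr2⟩ : ∃ r, 5*r ≤ t ∧ t ≤ 5*r+4 := ⟨t/5, by omega, by omega⟩
  have hm1 : (5*r)*(5*r) ≤ t*t := Nat.mul_le_mul hr1 hr1
  have hm2 : (t+1)*(t+1) ≤ (5*r+5)*(5*r+5) := Nat.mul_le_mul (by omega) (by omega)
  have hrn1 : 25*(r*r) ≤ n := by linarith [hm1, ht1]
  have hrn2 : n ≤ 25*(r*r)+50*r+24 := by linarith [hm2, ht2]
  have hr0 : 1 ≤ r := by
    by_contra hcon
    have hre : r = 0 := by omega
    subst hre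
    simp at hrn2
    omega
  have hbig : 8*(r*r)+16*r+8 ≤ n := by
    by_contra hcon
    push_neg at hcon
    have hrle : r ≤ 1 := by
      by_contra hcon2
      push_neg at hcon2
      have : 2*r ≤ r*r := Nat.mul_le_mul_right r (by omega)
      linarith
    have hre : r = 1 := by omega
    subst hre
    norm_num at hcon hrn1 hrn2
    omega
  have hbig' : 8*(r*r)+16*r+7 ≤ n+8*r+5 := by linarith
  obtain ⟨num, hnum⟩ := Nat.le.dest hbig'
  have hnum6 : 8*r+6 ≤ num := by linarith
  obtain ⟨s, w, hsw, hw⟩ : ∃ s w, (8*r+6)*s + w = num ∧ w < 8*r+6 :=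
    ⟨num/(8*r+6), num%(8*r+6), Nat.div_add_mod num (8*r+6), Nat.mod_lt _ (by omega)⟩
  have hs1 : 1 ≤ s := by
    rcases Nat.eq_zero_or_pos s with h | h
    · rw [h, Nat.mul_zero, Nat.zero_add] at hsw
      omega
    · exact h
  refine ⟨r, s, hs1, by linarith, ?_⟩
  have hub : (8*r+6)*s ≤ num := by linarith
  have hK6 : (8*r+6)*(4*r+s+3) ≤ n + 24*(r*r)+40*r+16 := by linarith
  have hsq : ((8*r+6)*(4*r+s+3))^2 ≤ (n + 24*(r*r)+40*r+16)^2 :=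
    Nat.pow_le_pow_left hK6 2
  have hpoly : 73*(n+24*(r*r)+40*r+16)^2 ≤ 144*n*(8*r+6)^2 := by
    rcases eq_or_lt_of_le hr0 with hre | hr2'
    · have hre' : r = 1 := hre.symm
      subst hre'
      have h99 : n ≤ 99 := by linarith [hrn2]
      exact poly_r1 n hn h99
    · have hzr : (2:ℤ) ≤ (r:ℤ) := by exact_mod_cast hr2'
      have hzx : 25*((r:ℤ)*(r:ℤ)) ≤ (n:ℤ) := by exact_mod_cast hrn1
      have hzX : (n:ℤ) ≤ 25*((r:ℤ)*(r:ℤ))+50*(r:ℤ)+24 := by exact_mod_cast hrn2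
      have hz := poly_r2 (r:ℤ) (n:ℤ) hzr hzx hzX
      zify
      linarith [hz]
  have hfin : (73*(4*r+s+3)^2)*((8*r+6)^2) ≤ (144*n)*((8*r+6)^2) := by
    calc (73*(4*r+s+3)^2)*((8*r+6)^2) = 73*((8*r+6)*(4*r+s+3))^2 := by ring
      _ ≤ 73*(n + 24*(r*r)+40*r+16)^2 := Nat.mul_le_mul_left 73 hsq
      _ ≤ 144*n*(8*r+6)^2 := hpoly
      _ = (144*n)*((8*r+6)^2) := by ring
  exact Nat.le_of_mul_le_mul_right hfin (by positivity)


lemma wich_main (n r s : ℕ) (hn : 1 ≤ n) (hs : 1 ≤ s)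
    (hcov : n ≤ 8*r*r+8*r*s+16*r+6*s+7)
    (hineq : 73*(4*r+s+3)^2 ≤ 144*n) :
    (diffSize (Multiplicative (ZMod n)) : ℝ) ≤ 12 / Real.sqrt 73 * Real.sqrt n := by
  have hcover : ∀ d, d ≤ 4*r*r+4*r*s+8*r+3*s+3 →
      ∃ a ∈ wichW r s, ∃ b ∈ wichW r s, a = b + d :=
    fun d hd => wich_cover r s d hs hd
  have hruler := ruler_bound n hn (wichW r s) (4*r*r+4*r*s+8*r+3*s+3) hcover (by linarith)
  exact real_step n (4*r+s+3) (le_trans hruler (wichW_card r s)) hineq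

lemma case32 :
    (diffSize (Multiplicative (ZMod 32)) : ℝ) ≤ 12 / Real.sqrt 73 * Real.sqrt 32 := by
  have hcov : ∀ d, d ≤ 16 → ∃ a ∈ ({0,1,2,3,8,12,16} : Finset ℕ),
      ∃ b ∈ ({0,1,2,3,8,12,16} : Finset ℕ), a = b + d := by decide
  have hruler := ruler_bound 32 (by norm_num) ({0,1,2,3,8,12,16} : Finset ℕ) 16 hcov (by norm_num)
  have hcard : ({0,1,2,3,8,12,16} : Finset ℕ).card = 7 := by decide
  rw [hcard] at hruler
  have := real_step 32 7 hruler (by norm_num)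
  exact_mod_cast this

theorem stmt9 (n : ℕ) (hn : 9 ≤ n) :
    (diffSize (Multiplicative (ZMod n)) : ℝ) ≤ 12 / Real.sqrt 73 * Real.sqrt n := by
  rcases le_or_gt 44 n with h44 | h44
  · obtain ⟨r, s, hs, hcov, hineq⟩ := select n h44
    exact wich_main n r s (by omega) hs hcov hineq
  · by_cases h32 : n = 32
    · subst h32
      exact_mod_cast case32
    · rcases le_or_gt n 13 with h | h
      · exact wich_main n 0 1 (by omega) (by omega) (by norm_num; omega) (by norm_num; omega)
      · rcases le_or_gt n 19 with h2 | h2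
        · exact wich_main n 0 2 (by omega) (by omega) (by norm_num; omega) (by norm_num; omega)
        · rcases le_or_gt n 25 with h3 | h3
          · exact wich_main n 0 3 (by omega) (by omega) (by norm_num; omega) (by norm_num; omega)
          · rcases le_or_gt n 31 with h4 | h4
            · exact wich_main n 0 4 (by omega) (by omega) (by norm_num; omega) (by norm_num; omega)
            · rcases le_or_gt n 37 with h5 | h5
              · exact wich_main n 0 5 (by omega) (by omega) (by norm_num; omega) (by norm_num; omega)
              · exact wich_main n 1 1 (by omega) (by omega) (by norm_num; omega) (by norm_num; omega)
end

section
/- For every integer n ≥ 9 with n ≠ 292, the cyclic group C_n of order n satisfies ð[C_n] ≤ 24/√293, i.e., Δ[C_n] ≤ (24/√293)·√n. -/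
namespace Stmt10Aux


def PP (r s : ℕ) : ℕ := (2*r+1)*(r+1) + (4*r+3)*s
def QQ (r s : ℕ) : ℕ := PP r s + (2*r+2)*(r+1)

def wm (r s : ℕ) : Finset ℕ :=
  (((((Finset.range (r+1)).image (fun j => j)) ∪
   ((Finset.range (r+1)).image (fun k => (2*r+1)*(k+1)))) ∪
   ((Finset.range s).image (fun j => (2*r+1)*(r+1) + (4*r+3)*(j+1)))) ∪
   ((Finset.range (r+1)).image (fun l => PP r s + (2*r+2)*(l+1)))) ∪
   ((Finset.range r).image (fun t => QQ r s + (t+1)))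

lemma wm_card (r s : ℕ) : (wm r s).card ≤ 4*r+s+3 := by
  have h : ∀ (k : ℕ) (f : ℕ → ℕ), ((Finset.range k).image f).card ≤ k := fun k f =>
    le_trans (Finset.card_image_le) (by simp)
  unfold wm
  have c1 := Finset.card_union_le
    (((((Finset.range (r+1)).image (fun j => j)) ∪
   ((Finset.range (r+1)).image (fun k => (2*r+1)*(k+1)))) ∪
   ((Finset.range s).image (fun j => (2*r+1)*(r+1) + (4*r+3)*(j+1)))) ∪
   ((Finset.range (r+1)).image (fun l => PP r s + (2*r+2)*(l+1))))
    ((Finset.range r).image (fun t => QQ r s + (t+1)))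
  have c2 := Finset.card_union_le
    ((((Finset.range (r+1)).image (fun j => j)) ∪
   ((Finset.range (r+1)).image (fun k => (2*r+1)*(k+1)))) ∪
   ((Finset.range s).image (fun j => (2*r+1)*(r+1) + (4*r+3)*(j+1))))
    ((Finset.range (r+1)).image (fun l => PP r s + (2*r+2)*(l+1)))
  have c3 := Finset.card_union_le
    (((Finset.range (r+1)).image (fun j => j)) ∪
   ((Finset.range (r+1)).image (fun k => (2*r+1)*(k+1))))
    ((Finset.range s).image (fun j => (2*r+1)*(r+1) + (4*r+3)*(j+1)))
  have c4 := Finset.card_union_le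
    ((Finset.range (r+1)).image (fun j => j))
    ((Finset.range (r+1)).image (fun k => (2*r+1)*(k+1)))
  have h1 := h (r+1) (fun j => j)
  have h2 := h (r+1) (fun k => (2*r+1)*(k+1))
  have h3 := h s (fun j => (2*r+1)*(r+1) + (4*r+3)*(j+1))
  have h4 := h (r+1) (fun l => PP r s + (2*r+2)*(l+1))
  have h5 := h r (fun t => QQ r s + (t+1))
  omega

lemma memA (r s j : ℕ) (hj : j ≤ r) : j ∈ wm r s := by
  unfold wm
  refine Finset.mem_union_left _ (Finset.mem_union_left _ (Finset.mem_union_left _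
    (Finset.mem_union_left _ (Finset.mem_image.2 ⟨j, Finset.mem_range.2 (by omega), rfl⟩))))

lemma memB (r s k : ℕ) (hk1 : 1 ≤ k) (hk2 : k ≤ r+1) : (2*r+1)*k ∈ wm r s := by
  unfold wm
  refine Finset.mem_union_left _ (Finset.mem_union_left _ (Finset.mem_union_left _
    (Finset.mem_union_right _ (Finset.mem_image.2 ⟨k-1, Finset.mem_range.2 (by omega), by
      rw [Nat.sub_add_cancel hk1]⟩))))

lemma memC (r s e : ℕ) (he : e ≤ s) : (2*r+1)*(r+1) + (4*r+3)*e ∈ wm r s := by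
  rcases e with _ | e
  · simpa using memB r s (r+1) (by omega) le_rfl
  · unfold wm
    refine Finset.mem_union_left _ (Finset.mem_union_left _ (Finset.mem_union_right _
      (Finset.mem_image.2 ⟨e, Finset.mem_range.2 (by omega), rfl⟩)))

lemma memD (r s l : ℕ) (hl : l ≤ r+1) : PP r s + (2*r+2)*l ∈ wm r s := by
  rcases l with _ | l
  · simpa [PP] using memC r s s le_rfl
  · unfold wm
    refine Finset.mem_union_left _ (Finset.mem_union_right _
      (Finset.mem_image.2 ⟨l, Finset.mem_range.2 (by omega), rfl⟩))

lemma memE (r s t : ℕ) (ht : t ≤ r) : QQ r s + t ∈ wm r s := by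
  rcases t with _ | t
  · simpa [QQ] using memD r s (r+1) le_rfl
  · unfold wm
    refine Finset.mem_union_right _
      (Finset.mem_image.2 ⟨t, Finset.mem_range.2 (by omega), rfl⟩)

lemma wm_cover (r s : ℕ) (hrs : r ≤ s) (m : ℕ)
    (hm : m ≤ 4*r^2+8*r+3+(4*r+3)*s) :
    ∃ a ∈ wm r s, ∃ b ∈ wm r s, b + m = a := by
  have hPP : PP r s = (2*r+1)*(r+1) + (4*r+3)*s := rfl
  have hQQ : QQ r s = PP r s + (2*r+2)*(r+1) := rfl
  by_cases h1 : m ≤ (2*r+1)*(r+1)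
  · -- Region 1
    obtain ⟨q, e, hqe, he⟩ : ∃ q e, m = (2*r+1)*q + e ∧ e < 2*r+1 :=
      ⟨m / (2*r+1), m % (2*r+1), by
        have := Nat.div_add_mod m (2*r+1); omega,
        Nat.mod_lt _ (by omega)⟩
    subst hqe
    have hq1 : q ≤ r + 1 :=
      Nat.le_of_mul_le_mul_left (show (2*r+1)*q ≤ (2*r+1)*(r+1) by omega) (by omega)
    have hq0 : 1 ≤ e → q ≤ r := by
      intro he1
      by_contra hc
      have h2 : (2*r+1)*(r+1) ≤ (2*r+1)*q := Nat.mul_le_mul le_rfl (by omega)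
      omega
    rcases Nat.eq_zero_or_pos e with he0 | he1
    · rcases Nat.eq_zero_or_pos q with hq | hq
      · refine ⟨0, memA r s 0 (by omega), 0, memA r s 0 (by omega), ?_⟩
        subst he0; subst hq; simp
      · exact ⟨(2*r+1)*q, memB r s q hq hq1, 0, memA r s 0 (by omega), by omega⟩
    · have hqr := hq0 he1
      by_cases hcase : r+1 ≤ e
      · refine ⟨(2*r+1)*(q+1), memB r s (q+1) (by omega) (by omega),
          2*r+1-e, memA r s _ (by omega), ?_⟩
        zify [show e ≤ 2*r+1 by omega]; ring
      · by_cases hq2 : q ≤ e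
        · refine ⟨QQ r s + (e-q), memE r s _ (by omega),
            PP r s + (2*r+2)*(r+1-q), memD r s _ (by omega), ?_⟩
          unfold QQ
          zify [hq2, show q ≤ r+1 by omega]; ring
        · by_cases hq3 : 2*e ≤ q
          · refine ⟨(2*r+1)*(r+1) + (4*r+3)*e, memC r s e (by omega),
              (2*r+1)*(r+1-(q-2*e)), memB r s _ (by omega) (by omega), ?_⟩
            zify [show q-2*e ≤ r+1 by omega, hq3]; ring
          · refine ⟨PP r s + (2*r+2)*(2*e-q), memD r s _ (by omega),
              (2*r+1)*(r+1) + (4*r+3)*(s-(q-e)), memC r s _ (by omega), ?_⟩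
            unfold PP
            zify [show q ≤ 2*e by omega, show e ≤ q by omega, show q-e ≤ s by omega]; ring
  · by_cases h2 : m ≤ (2*r+1)*(r+1) + (4*r+3)*s
    · -- Region 2
      obtain ⟨y, z, hyz, hz⟩ : ∃ y z, m = (2*r+1)*(r+1) + ((4*r+3)*y + z) ∧ z < 4*r+3 :=
        ⟨(m - (2*r+1)*(r+1)) / (4*r+3), (m - (2*r+1)*(r+1)) % (4*r+3), by
          have := Nat.div_add_mod (m - (2*r+1)*(r+1)) (4*r+3); omega,
          Nat.mod_lt _ (by omega)⟩
      subst hyz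
      have hy1 : y ≤ s :=
        Nat.le_of_mul_le_mul_left (show (4*r+3)*y ≤ (4*r+3)*s by omega) (by omega)
      have hy2 : 1 ≤ z → y < s := by
        intro hz1
        by_contra hc
        have h3 : (4*r+3)*s ≤ (4*r+3)*y := Nat.mul_le_mul le_rfl (by omega)
        omega
      rcases Nat.eq_zero_or_pos z with hz0 | hz1
      · exact ⟨(2*r+1)*(r+1) + (4*r+3)*y, memC r s y hy1, 0, memA r s 0 (by omega), by omega⟩
      · have hys := hy2 hz1
        by_cases hc1 : 3*r+3 ≤ z
        · refine ⟨(2*r+1)*(r+1) + (4*r+3)*(y+1), memC r s _ (by omega),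
            4*r+3-z, memA r s _ (by omega), ?_⟩
          zify [show z ≤ 4*r+3 by omega]; ring
        · by_cases hc2 : r+1 ≤ z
          · by_cases hc3 : z ≤ 2*r+1
            · refine ⟨QQ r s + (z-(r+1)), memE r s _ (by omega),
                (2*r+1)*(r+1) + (4*r+3)*(s-y), memC r s _ (by omega), ?_⟩
              unfold QQ PP
              zify [hc2, hy1]; ring
            · -- 2r+2 ≤ z ≤ 3r+2
              by_cases hd1 : 2*z ≤ 5*r+4 ∧ y + (z-(2*r+2)) + 1 ≤ s
              · refine ⟨(2*r+1)*(r+1) + (4*r+3)*(y+(z-(2*r+2))+1), memC r s _ (by omega),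
                  (2*r+1)*(2*(z-(2*r+2))+1), memB r s _ (by omega) (by omega), ?_⟩
                zify [show 2*r+2 ≤ z by omega]; ring
              · by_cases hd2 : 5*r+4 ≤ 2*z ∧ y + (3*r+3-z) ≤ s
                · refine ⟨PP r s + (2*r+2)*(2*z-(5*r+4)), memD r s _ (by omega),
                    (2*r+1)*(r+1) + (4*r+3)*(s-(y+(3*r+3-z))), memC r s _ (by omega), ?_⟩
                  unfold PP
                  zify [show 5*r+4 ≤ 2*z from hd2.1, show z ≤ 3*r+3 by omega,
                    show y+(3*r+3-z) ≤ s from hd2.2]; ring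
                · refine ⟨PP r s + (2*r+2)*(z-(2*r+1)-(s-y)), memD r s _ (by omega),
                    (2*r+1)*((z-(2*r+2))+(s-y)), memB r s _ (by omega) (by omega), ?_⟩
                  unfold PP
                  zify [show y ≤ s by omega, show s-y ≤ z-(2*r+1) by omega,
                    show 2*r+1 ≤ z by omega, show 2*r+2 ≤ z by omega]; ring
          · -- 1 ≤ z ≤ r
            by_cases hd1 : y + z ≤ s ∧ 2*z ≤ r+1
            · refine ⟨(2*r+1)*(r+1) + (4*r+3)*(y+z), memC r s _ hd1.1,
                (2*r+1)*(2*z), memB r s _ (by omega) (by omega), ?_⟩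
              zify; ring
            · by_cases hd2 : r+1 ≤ 2*z ∧ y + (r+1-z) ≤ s
              · refine ⟨PP r s + (2*r+2)*(2*z-(r+1)), memD r s _ (by omega),
                  (2*r+1)*(r+1) + (4*r+3)*(s-(y+(r+1-z))), memC r s _ (by omega), ?_⟩
                unfold PP
                zify [show r+1 ≤ 2*z from hd2.1, show z ≤ r+1 by omega,
                  show y+(r+1-z) ≤ s from hd2.2]; ring
              · refine ⟨PP r s + (2*r+2)*(z-(s-y)), memD r s _ (by omega),
                  (2*r+1)*(z+(s-y)), memB r s _ (by omega) (by omega), ?_⟩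
                unfold PP
                zify [show y ≤ s by omega, show s-y ≤ z by omega]; ring
    · -- Region 3
      have hL : 4*r^2+8*r+3+(4*r+3)*s = PP r s + ((2*r+2)*(r+1) + r) := by
        unfold PP; ring
      rw [hL] at hm
      obtain ⟨l, t, hlt, ht⟩ : ∃ l t, m = PP r s + ((2*r+2)*l + t) ∧ t < 2*r+2 :=
        ⟨(m - PP r s) / (2*r+2), (m - PP r s) % (2*r+2), by
          have := Nat.div_add_mod (m - PP r s) (2*r+2); omega,
          Nat.mod_lt _ (by omega)⟩
      subst hlt
      have hl1 : l ≤ r + 1 := by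
        by_contra hc
        have h3 : (2*r+2)*(r+2) ≤ (2*r+2)*l := Nat.mul_le_mul le_rfl (by omega)
        have h4 : (2*r+2)*(r+2) = (2*r+2)*(r+1) + (2*r+2) := by ring
        omega
      have hl2 : l = r+1 → t ≤ r := by
        intro h; subst h; omega
      rcases Nat.eq_zero_or_pos t with ht0 | ht1
      · refine ⟨PP r s + (2*r+2)*l, memD r s _ hl1, 0, memA r s 0 (by omega), by omega⟩
      · by_cases hc1 : r+2 ≤ t
        · have hlr : l ≤ r := by
            rcases Nat.lt_or_ge l (r+1) with h | h
            · omega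
            · have := hl2 (by omega); omega
          refine ⟨PP r s + (2*r+2)*(l+1), memD r s _ (by omega),
            2*r+2-t, memA r s _ (by omega), ?_⟩
          zify [show t ≤ 2*r+2 by omega]; ring
        · by_cases hc2 : l+t ≤ r+1
          · refine ⟨PP r s + (2*r+2)*(l+t), memD r s _ hc2,
              (2*r+1)*t, memB r s _ (by omega) (by omega), ?_⟩
            ring
          · rcases Nat.lt_or_ge l (r+1) with hlr | hlr
            · refine ⟨QQ r s + (t+l-(r+1)), memE r s _ (by omega),
                (2*r+1)*(r+1-l), memB r s _ (by omega) (by omega), ?_⟩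
              unfold QQ
              zify [show r+1 ≤ t+l by omega, show l ≤ r+1 by omega]; ring
            · have hlr1 : l = r+1 := by omega
              have := hl2 hlr1
              subst hlr1
              refine ⟨QQ r s + t, memE r s _ (by omega), 0, memA r s 0 (by omega), ?_⟩
              unfold QQ
              omega




lemma ruler_bound (A : Finset ℕ) (L n : ℕ) (hn : 0 < n) (hn2 : n ≤ 2*L+1)
    (hcov : ∀ m ≤ L, ∃ a ∈ A, ∃ b ∈ A, b + m = a) :
    diffSize (Multiplicative (ZMod n)) ≤ A.card := by
  haveI : NeZero n := ⟨by omega⟩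
  set f : ℕ → Multiplicative (ZMod n) := fun a => Multiplicative.ofAdd ((a : ZMod n)) with hf
  set B : Finset (Multiplicative (ZMod n)) := A.image f with hB
  have hbasis : IsDiffBasis B := by
    intro g
    set x : ZMod n := Multiplicative.toAdd g with hx
    have hxval : ((x.val : ℕ) : ZMod n) = x := by
      rw [ZMod.natCast_val, ZMod.cast_id]
    have hvlt : x.val < n := ZMod.val_lt x
    rcases le_or_gt x.val L with hv | hv
    · obtain ⟨a, ha, b, hb, hab⟩ := hcov x.val hv
      refine ⟨f a, Finset.mem_image_of_mem f ha, f b, Finset.mem_image_of_mem f hb, ?_⟩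
      have : ((b : ZMod n)) + ((x.val : ℕ) : ZMod n) = ((a : ZMod n)) := by
        rw [← Nat.cast_add, hab]
      have hxab : x = ((a : ZMod n)) - ((b : ZMod n)) := by
        rw [← hxval]; rw [← this]; ring
      show g = f a * (f b)⁻¹
      simp only [hf]
      rw [← div_eq_mul_inv, ← ofAdd_sub, ← hxab, hx]
      simp
    · obtain ⟨a, ha, b, hb, hab⟩ := hcov (n - x.val) (by omega)
      refine ⟨f b, Finset.mem_image_of_mem f hb, f a, Finset.mem_image_of_mem f ha, ?_⟩
      have h0 : ((b : ZMod n)) + (((n - x.val : ℕ)) : ZMod n) = ((a : ZMod n)) := by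
        rw [← Nat.cast_add, hab]
      have h1 : (((n - x.val : ℕ)) : ZMod n) = - x := by
        have : ((n - x.val : ℕ) : ZMod n) + ((x.val : ℕ) : ZMod n) = ((n : ℕ) : ZMod n) := by
          rw [← Nat.cast_add]; congr 1; omega
        rw [hxval, ZMod.natCast_self] at this
        linear_combination this
      have hxab : x = ((b : ZMod n)) - ((a : ZMod n)) := by
        rw [← h0, h1]; ring
      show g = f b * (f a)⁻¹
      simp only [hf]
      rw [← div_eq_mul_inv, ← ofAdd_sub, ← hxab, hx]
      simp
  calc diffSize (Multiplicative (ZMod n)) ≤ B.card :=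
        Nat.sInf_le ⟨B, rfl, hbasis⟩
    _ ≤ A.card := Finset.card_image_le

lemma final_step (n m : ℕ) (h : diffSize (Multiplicative (ZMod n)) ≤ m)
    (h2 : 293*m^2 ≤ 576*n) :
    (diffSize (Multiplicative (ZMod n)) : ℝ) ≤ 24 / Real.sqrt 293 * Real.sqrt n := by
  have hs293 : (0:ℝ) < Real.sqrt 293 := Real.sqrt_pos.2 (by norm_num)
  have key : (m : ℝ) * Real.sqrt 293 ≤ 24 * Real.sqrt n := by
    have h1 : Real.sqrt (293 * m^2) ≤ Real.sqrt (576 * n) := by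
      apply Real.sqrt_le_sqrt
      have := (Nat.cast_le (α := ℝ)).2 h2
      push_cast at this ⊢
      linarith
    have e1 : Real.sqrt (293 * m^2) = Real.sqrt 293 * m := by
      rw [Real.sqrt_mul (by norm_num)]
      congr 1
      rw [show ((m:ℝ)^2) = (m:ℝ)^2 from rfl, Real.sqrt_sq (by positivity)]
    have e2 : Real.sqrt (576 * n) = 24 * Real.sqrt n := by
      rw [Real.sqrt_mul (by norm_num)]
      congr 1
      rw [show (576:ℝ) = 24^2 by norm_num, Real.sqrt_sq (by norm_num)]
    rw [e1, e2] at h1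
    linarith
  have hm : (m : ℝ) ≤ 24 / Real.sqrt 293 * Real.sqrt n := by
    rw [div_mul_eq_mul_div, le_div_iff₀ hs293]
    linarith
  calc (diffSize (Multiplicative (ZMod n)) : ℝ) ≤ (m : ℝ) := by exact_mod_cast h
    _ ≤ _ := hm




lemma select (n : ℕ) (hn : 9 ≤ n) (h32 : n ≠ 32) :
    ∃ r s : ℕ, r ≤ s ∧ n ≤ 2*(4*(r*r)+8*r+3+(4*r+3)*s)+1 ∧
      293*((4*r+s+3)*(4*r+s+3)) ≤ 576*n := by
  by_cases hbig : 1944 ≤ n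
  · set r := Nat.sqrt (n / 24) with hr
    have hr2 : r * r ≤ n / 24 := Nat.sqrt_le (n / 24)
    have hr3 : n / 24 < (r+1) * (r+1) := Nat.lt_succ_sqrt (n / 24)
    have hr9 : 9 ≤ r := Nat.le_sqrt.2 (by omega)
    have h24n : 24*(r*r) ≤ n := by omega
    have h24n' : n < 24*((r+1)*(r+1)) := by omega
    obtain ⟨D, ρ, hρ, hD⟩ : ∃ D ρ, ρ < 8*r+6 ∧ n = (8*r+6)*D + ρ :=
      ⟨n/(8*r+6), n%(8*r+6), Nat.mod_lt _ (by omega), by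
        have := Nat.div_add_mod n (8*r+6); omega⟩
    have hD2 : D ≤ 3*r+3 := by
      by_contra hc
      have h3 : (8*r+6)*(3*r+4) ≤ (8*r+6)*D := Nat.mul_le_mul le_rfl (by omega)
      have h4 : (8*r+6)*(3*r+4) = 24*(r*r)+50*r+24 := by ring
      have h5 : 24*((r+1)*(r+1)) = 24*(r*r)+48*r+24 := by ring
      omega
    have hD1 : 3*r ≤ D + 3 := by
      by_contra hc
      have h3 : (8*r+6)*(D+4) ≤ (8*r+6)*(3*r) := Nat.mul_le_mul le_rfl (by omega)
      have h4 : (8*r+6)*(D+4) = (8*r+6)*D + 32*r+24 := by ring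
      have h5 : (8*r+6)*(3*r) = 24*(r*r)+18*r := by ring
      omega
    obtain ⟨s, hs⟩ : ∃ s, s + r = D + 1 := ⟨D+1-r, by omega⟩
    have e1 : (4*r+3)*(s+r) = (4*r+3)*s + (4*(r*r)+3*r) := by ring
    have e3 : (4*r+3)*s + (4*(r*r)+3*r) = (4*r+3)*(D+1) := by rw [← e1, hs]
    have e4 : 2*((4*r+3)*(D+1)) = (8*r+6)*D + (8*r+6) := by ring
    refine ⟨r, s, by omega, by omega, ?_⟩
    have hmono : 293*((4*r+s+3)*(4*r+s+3)) ≤ 293*((6*r+7)*(6*r+7)) :=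
      Nat.mul_le_mul le_rfl (Nat.mul_le_mul (by omega) (by omega))
    have expand : 293*((6*r+7)*(6*r+7)) = 10548*(r*r)+24612*r+14357 := by ring
    have h9r : 9*r ≤ r*r := Nat.mul_le_mul_right r hr9
    omega
  · push_neg at hbig
    by_cases h0 : n ≤ 13
    · exact ⟨0, 1, by omega, by omega, by omega⟩
    by_cases h1 : n ≤ 19
    · exact ⟨0, 2, by omega, by omega, by omega⟩
    by_cases h2 : n ≤ 25
    · exact ⟨0, 3, by omega, by omega, by omega⟩
    by_cases h3 : n ≤ 31
    · exact ⟨0, 4, by omega, by omega, by omega⟩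
    by_cases h4 : n ≤ 45
    · exact ⟨1, 1, by omega, by omega, by omega⟩
    by_cases h5 : n ≤ 59
    · exact ⟨1, 2, by omega, by omega, by omega⟩
    by_cases h6 : n ≤ 73
    · exact ⟨1, 3, by omega, by omega, by omega⟩
    by_cases h7 : n ≤ 101
    · exact ⟨1, 5, by omega, by omega, by omega⟩
    by_cases h8 : n ≤ 137
    · exact ⟨2, 3, by omega, by omega, by omega⟩
    by_cases h9 : n ≤ 181
    · exact ⟨2, 5, by omega, by omega, by omega⟩
    by_cases h10 : n ≤ 225
    · exact ⟨2, 7, by omega, by omega, by omega⟩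
    by_cases h11 : n ≤ 307
    · exact ⟨3, 6, by omega, by omega, by omega⟩
    by_cases h12 : n ≤ 397
    · exact ⟨3, 9, by omega, by omega, by omega⟩
    by_cases h13 : n ≤ 503
    · exact ⟨4, 8, by omega, by omega, by omega⟩
    by_cases h14 : n ≤ 655
    · exact ⟨4, 12, by omega, by omega, by omega⟩
    by_cases h15 : n ≤ 839
    · exact ⟨5, 12, by omega, by omega, by omega⟩
    by_cases h16 : n ≤ 1093
    · exact ⟨6, 13, by omega, by omega, by omega⟩
    by_cases h17 : n ≤ 1441
    · exact ⟨7, 15, by omega, by omega, by omega⟩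
    by_cases h18 : n ≤ 1907
    · exact ⟨8, 18, by omega, by omega, by omega⟩
    exact ⟨9, 22, by omega, by omega, by omega⟩


end Stmt10Aux

theorem stmt10 (n : ℕ) (hn : 9 ≤ n) (hn292 : n ≠ 292) :
    (diffSize (Multiplicative (ZMod n)) : ℝ) ≤ 24 / Real.sqrt 293 * Real.sqrt n := by
  by_cases h32 : n = 32
  · subst h32
    refine Stmt10Aux.final_step 32 7 ?_ (by norm_num)
    have hb := Stmt10Aux.ruler_bound ({0,1,2,3,8,13,17} : Finset ℕ) 17 32
      (by norm_num) (by norm_num) (by decide)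
    have hA : ({0,1,2,3,8,13,17} : Finset ℕ).card = 7 := by decide
    omega
  · obtain ⟨r, s, hrs, hc1, hc2⟩ := Stmt10Aux.select n hn h32
    refine Stmt10Aux.final_step n (4*r+s+3) ?_ (by rw [pow_two]; exact hc2)
    refine le_trans (Stmt10Aux.ruler_bound (Stmt10Aux.wm r s) (4*r^2+8*r+3+(4*r+3)*s) n
      (by omega) (by rw [pow_two]; exact hc1)
      (fun m hm => Stmt10Aux.wm_cover r s hrs m hm)) (Stmt10Aux.wm_card r s)
end

section
/- For every prime number p ≥ 2, the cyclic group of order p² − p satisfies Δ[C_{p²−p}] ≤ p − 3 + Δ[C_p] + Δ[C_{p−1}]. -/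
/-- Additive version of difference basis. -/
def IsAddDB {M : Type*} [AddGroup M] (B : Finset M) : Prop :=
  ∀ g : M, ∃ a ∈ B, ∃ b ∈ B, g = a - b

lemma diffSize_le_of_addDB {M : Type*} [AddGroup M] {B : Finset M} (h : IsAddDB B) :
    diffSize (Multiplicative M) ≤ B.card := by
  apply Nat.sInf_le
  refine ⟨B.map (Multiplicative.ofAdd).toEmbedding, by simp, ?_⟩
  intro g
  obtain ⟨a, ha, b, hb, hab⟩ := h (Multiplicative.toAdd g)
  refine ⟨Multiplicative.ofAdd a, ?_, Multiplicative.ofAdd b, ?_, ?_⟩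
  · exact Finset.mem_map_of_mem _ ha
  · exact Finset.mem_map_of_mem _ hb
  · apply Multiplicative.toAdd.injective
    simpa [sub_eq_add_neg] using hab

lemma exists_addDB {M : Type*} [AddGroup M] [Fintype M] :
    ∃ B : Finset M, B.card = diffSize (Multiplicative M) ∧ IsAddDB B := by
  have hne : {k | ∃ B : Finset (Multiplicative M), B.card = k ∧ IsDiffBasis B}.Nonempty := by
    refine ⟨(Finset.univ : Finset (Multiplicative M)).card, Finset.univ, rfl, ?_⟩
    intro g
    exact ⟨g, Finset.mem_univ _, 1, Finset.mem_univ _, by simp⟩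
  obtain ⟨B', hcard, hB'⟩ := Nat.sInf_mem hne
  refine ⟨B'.map (Multiplicative.toAdd).toEmbedding, by simpa [diffSize] using hcard, ?_⟩
  intro g
  obtain ⟨a, ha, b, hb, hab⟩ := hB' (Multiplicative.ofAdd g)
  refine ⟨Multiplicative.toAdd a, ?_, Multiplicative.toAdd b, ?_, ?_⟩
  · exact Finset.mem_map_of_mem _ ha
  · exact Finset.mem_map_of_mem _ hb
  · apply Multiplicative.ofAdd.injective
    simpa [sub_eq_add_neg] using hab

/-- Transport of an additive difference basis along an additive equivalence. -/
lemma isAddDB_map {M N : Type*} [AddGroup M] [AddGroup N] (e : M ≃+ N) {B : Finset M}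
    (h : IsAddDB B) : IsAddDB (B.map e.toEquiv.toEmbedding) := by
  intro g
  obtain ⟨a, ha, b, hb, hab⟩ := h (e.symm g)
  refine ⟨e a, Finset.mem_map_of_mem _ ha, e b, Finset.mem_map_of_mem _ hb, ?_⟩
  have := congrArg e hab
  simpa [map_sub] using this

theorem stmt14 (p : ℕ) (hp : p.Prime) (hp2 : 2 ≤ p) :
    (diffSize (Multiplicative (ZMod (p ^ 2 - p))) : ℤ) ≤
      (p : ℤ) - 3 + diffSize (Multiplicative (ZMod p)) +
        diffSize (Multiplicative (ZMod (p - 1))) := by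
  haveI : Fact p.Prime := ⟨hp⟩
  haveI : NeZero p := ⟨by omega⟩
  haveI : NeZero (p - 1) := ⟨by omega⟩
  haveI : Fact (1 < p) := ⟨by omega⟩
  -- a generator of the units of ZMod p
  obtain ⟨ζ, hζ⟩ := IsCyclic.exists_generator (α := (ZMod p)ˣ)
  have hord : orderOf ζ = p - 1 := by
    rw [orderOf_eq_card_of_forall_mem_zpowers hζ, Nat.card_eq_fintype_card, ZMod.card_units]
  -- the exponential map χ : ZMod (p-1) → (ZMod p)ˣ
  set χ : ZMod (p - 1) → (ZMod p)ˣ := fun i => ζ ^ i.val with hχdef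
  have hχadd : ∀ i j : ZMod (p - 1), χ (i + j) = χ i * χ j := by
    intro i j
    rw [hχdef]
    simp only
    rw [← pow_add, pow_eq_pow_iff_modEq, hord, ZMod.val_add]
    exact Nat.mod_modEq _ _
  have hχinj : Function.Injective χ := by
    intro i j hij
    have : i.val ≡ j.val [MOD p - 1] := by
      have h2 := pow_eq_pow_iff_modEq.mp hij
      rwa [hord] at h2
    have hi := ZMod.val_lt i
    have hj := ZMod.val_lt j
    have : i.val = j.val := by
      rwa [Nat.ModEq, Nat.mod_eq_of_lt hi, Nat.mod_eq_of_lt hj] at this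
    exact ZMod.val_injective _ this
  have hχsurj : Function.Surjective χ := by
    have hbij : Function.Bijective χ := by
      rw [Fintype.bijective_iff_injective_and_card]
      refine ⟨hχinj, ?_⟩
      rw [ZMod.card, ZMod.card_units]
    exact hbij.2
  have hχzero : χ 0 = 1 := by
    rw [hχdef]; simp [ZMod.val_zero]
  -- c : ZMod (p-1) → ZMod p
  set c : ZMod (p - 1) → ZMod p := fun i => ((χ i : (ZMod p)ˣ) : ZMod p) with hcdef
  have hcadd : ∀ i j, c (i + j) = c i * c j := by
    intro i j; rw [hcdef]; simp only [hχadd, Units.val_mul]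
  have hczero : c 0 = 1 := by rw [hcdef]; simp only [hχzero, Units.val_one]
  have hcne : ∀ i, c i ≠ 0 := fun i => Units.ne_zero _
  have hcone : ∀ i, c i = 1 → i = 0 := by
    intro i hi
    apply hχinj
    rw [hχzero]
    apply Units.ext
    rw [Units.val_one]
    rw [hcdef] at hi
    exact hi
  have hcsurj : ∀ x : ZMod p, x ≠ 0 → ∃ i, c i = x := by
    intro x hx
    obtain ⟨u, hu⟩ := (isUnit_iff_ne_zero.mpr hx)
    obtain ⟨i, hi⟩ := hχsurj u
    exact ⟨i, by rw [hcdef]; simp only [hi, hu]⟩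
  -- a normalized difference basis of ZMod p containing 0 and 1
  obtain ⟨A, hAcard, hA⟩ := exists_addDB (M := ZMod p)
  obtain ⟨a₀, ha₀, b₀, hb₀, hab₀⟩ := hA 1
  have hu0 : a₀ - b₀ ≠ 0 := by rw [← hab₀]; exact one_ne_zero
  set u : ZMod p := a₀ - b₀ with hudef
  have huinv : u * u⁻¹ = 1 := mul_inv_cancel₀ hu0
  set φ : ZMod p → ZMod p := fun x => (x - b₀) * u⁻¹ with hφdef
  have hφinj : Function.Injective φ := by
    intro x y hxy
    rw [hφdef] at hxy
    simp only at hxy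
    have := mul_right_cancel₀ (inv_ne_zero hu0) hxy
    linear_combination this
  set A' : Finset (ZMod p) := A.image φ with hA'def
  have hA'card : A'.card = A.card := Finset.card_image_of_injective _ hφinj
  have h0A : (0 : ZMod p) ∈ A' := by
    rw [hA'def]
    exact Finset.mem_image.mpr ⟨b₀, hb₀, by rw [hφdef]; simp⟩
  have h1A : (1 : ZMod p) ∈ A' := by
    rw [hA'def]
    exact Finset.mem_image.mpr ⟨a₀, ha₀, by rw [hφdef]; simp only [← hudef, huinv]⟩
  have hA' : IsAddDB A' := by
    intro x
    obtain ⟨s, hs, t, ht, hst⟩ := hA (x * u)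
    refine ⟨φ s, Finset.mem_image_of_mem _ hs, φ t, Finset.mem_image_of_mem _ ht, ?_⟩
    rw [hφdef]
    simp only
    have : (s - b₀) * u⁻¹ - (t - b₀) * u⁻¹ = (s - t) * u⁻¹ := by ring
    rw [this, ← hst]
    rw [mul_assoc, huinv, mul_one]
  -- a normalized difference basis of ZMod (p-1) containing 0
  obtain ⟨B, hBcard, hB⟩ := exists_addDB (M := ZMod (p - 1))
  obtain ⟨c₀, hc₀, _, _, _⟩ := hB 0
  set B' : Finset (ZMod (p - 1)) := B.image (fun x => x - c₀) with hB'def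
  have hB'card : B'.card = B.card :=
    Finset.card_image_of_injective _ (fun x y h => by linear_combination h)
  have h0B : (0 : ZMod (p - 1)) ∈ B' := by
    rw [hB'def]
    exact Finset.mem_image.mpr ⟨c₀, hc₀, by simp⟩
  have hB' : IsAddDB B' := by
    intro x
    obtain ⟨s, hs, t, ht, hst⟩ := hB x
    refine ⟨s - c₀, Finset.mem_image_of_mem _ hs, t - c₀, Finset.mem_image_of_mem _ ht, ?_⟩
    rw [hst]; ring
  -- the construction in the product group
  classical
  set T : Finset (ZMod p × ZMod (p - 1)) :=
    (Finset.univ.filter (fun i => i ≠ 0)).image (fun i => (c i, i)) with hTdef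
  set AX : Finset (ZMod p × ZMod (p - 1)) := A'.image (fun a => (a, 0)) with hAXdef
  set BX : Finset (ZMod p × ZMod (p - 1)) := B'.image (fun b => ((0 : ZMod p), b)) with hBXdef
  set D : Finset (ZMod p × ZMod (p - 1)) := T ∪ (AX ∪ BX) with hDdef
  have hTmem : ∀ i : ZMod (p - 1), i ≠ 0 → (c i, i) ∈ D := by
    intro i hi
    rw [hDdef]
    exact Finset.mem_union_left _ (Finset.mem_image.mpr
      ⟨i, Finset.mem_filter.mpr ⟨Finset.mem_univ _, hi⟩, rfl⟩)
  have hAXmem : ∀ a : ZMod p, a ∈ A' → (a, (0 : ZMod (p - 1))) ∈ D := by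
    intro a ha
    rw [hDdef]
    exact Finset.mem_union_right _ (Finset.mem_union_left _ (Finset.mem_image_of_mem _ ha))
  have hBXmem : ∀ b : ZMod (p - 1), b ∈ B' → ((0 : ZMod p), b) ∈ D := by
    intro b hb
    rw [hDdef]
    exact Finset.mem_union_right _ (Finset.mem_union_right _ (Finset.mem_image_of_mem _ hb))
  -- D is an additive difference basis
  have hD : IsAddDB D := by
    rintro ⟨x, d⟩
    by_cases hd : d = 0
    · subst hd
      obtain ⟨s, hs, t, ht, hst⟩ := hA' x
      exact ⟨(s, 0), hAXmem s hs, (t, 0), hAXmem t ht, by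
        rw [Prod.mk_sub_mk, ← hst, sub_zero]⟩
    · by_cases hx : x = 0
      · subst hx
        obtain ⟨s, hs, t, ht, hst⟩ := hB' d
        exact ⟨(0, s), hBXmem s hs, (0, t), hBXmem t ht, by
          rw [Prod.mk_sub_mk, ← hst, sub_zero]⟩
      · have hune : c d - 1 ≠ 0 := by
          intro h
          exact hd (hcone d (by linear_combination h))
        have hyne : x * (c d - 1)⁻¹ ≠ 0 := mul_ne_zero hx (inv_ne_zero hune)
        obtain ⟨j, hj⟩ := hcsurj _ hyne
        have hxeq : x = c j * (c d - 1) := by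
          rw [hj, mul_assoc, inv_mul_cancel₀ hune, mul_one]
        by_cases hj0 : j = 0
        · -- x = c d - 1 ; use (c d, d) - (1, 0)
          subst hj0
          rw [hczero, one_mul] at hxeq
          exact ⟨(c d, d), hTmem d hd, (1, 0), hAXmem 1 h1A, by
            rw [Prod.mk_sub_mk, ← hxeq, sub_zero]⟩
        · by_cases hjd : j + d = 0
          · -- x = 1 - c j ; use (1, 0) - (c j, j)
            have hcd : c j * c d = 1 := by rw [← hcadd, hjd, hczero]
            have hxeq2 : x = 1 - c j := by rw [hxeq]; linear_combination hcd
            have hdj : d = -j := by linear_combination hjd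
            exact ⟨(1, 0), hAXmem 1 h1A, (c j, j), hTmem j hj0, by
              rw [Prod.mk_sub_mk, ← hxeq2, zero_sub, hdj]⟩
          · -- use (c (j+d), j+d) - (c j, j)
            have hxeq3 : x = c (j + d) - c j := by
              rw [hcadd, hxeq]; ring
            exact ⟨(c (j + d), j + d), hTmem _ hjd, (c j, j), hTmem j hj0, by
              rw [Prod.mk_sub_mk, ← hxeq3, add_sub_cancel_left]⟩
  -- cardinality bound
  have hTcard : T.card ≤ p - 2 := by
    calc T.card ≤ (Finset.univ.filter (fun i : ZMod (p - 1) => i ≠ 0)).card :=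
          Finset.card_image_le
      _ = p - 2 := by
          rw [Finset.filter_ne', Finset.card_erase_of_mem (Finset.mem_univ _),
            Finset.card_univ, ZMod.card]
          omega
  have hABcard : (AX ∪ BX).card + 1 ≤ A'.card + B'.card := by
    have hinter : 1 ≤ (AX ∩ BX).card := by
      rw [Nat.one_le_iff_ne_zero, ← Nat.pos_iff_ne_zero, Finset.card_pos]
      refine ⟨((0 : ZMod p), (0 : ZMod (p - 1))), Finset.mem_inter.mpr ⟨?_, ?_⟩⟩
      · rw [hAXdef]; exact Finset.mem_image_of_mem _ h0A
      · rw [hBXdef]; exact Finset.mem_image_of_mem _ h0B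
    have := Finset.card_union_add_card_inter AX BX
    have hax : AX.card = A'.card :=
      Finset.card_image_of_injective _ (fun x y h => congrArg Prod.fst h)
    have hbx : BX.card = B'.card :=
      Finset.card_image_of_injective _ (fun x y h => congrArg Prod.snd h)
    omega
  have hDcard : D.card + 1 ≤ (p - 2) + A'.card + B'.card := by
    have := Finset.card_union_le T (AX ∪ BX)
    rw [← hDdef] at this
    omega
  -- transport to ZMod (p^2 - p)
  have hcop : Nat.Coprime p (p - 1) := by
    rw [hp.coprime_iff_not_dvd]
    intro h
    have := Nat.le_of_dvd (by omega) h
    omega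
  have hkey : p ^ 2 - p = p * (p - 1) := by
    rw [pow_two, Nat.mul_sub, Nat.mul_one]
  rw [hkey]
  set e := (ZMod.chineseRemainder hcop).symm.toRingHom.toAddMonoidHom with hedef
  have hfin : diffSize (Multiplicative (ZMod (p * (p - 1)))) ≤ D.card := by
    have := isAddDB_map (ZMod.chineseRemainder hcop).symm.toAddEquiv hD
    have hle := diffSize_le_of_addDB this
    rwa [Finset.card_map] at hle
  have hAle : diffSize (Multiplicative (ZMod p)) ≤ A'.card := diffSize_le_of_addDB hA'
  have hAge : A'.card ≤ diffSize (Multiplicative (ZMod p)) := by rw [hA'card, hAcard]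
  have hBle : diffSize (Multiplicative (ZMod (p - 1))) ≤ B'.card := diffSize_le_of_addDB hB'
  have hBge : B'.card ≤ diffSize (Multiplicative (ZMod (p - 1))) := by rw [hB'card, hBcard]
  have hAeq : A'.card = diffSize (Multiplicative (ZMod p)) := le_antisymm hAge hAle
  have hBeq : B'.card = diffSize (Multiplicative (ZMod (p - 1))) := le_antisymm hBge hBle
  have h1 : (diffSize (Multiplicative (ZMod (p * (p - 1)))) : ℤ) ≤ (D.card : ℤ) := by
    exact_mod_cast hfin
  have h2 : (D.card : ℤ) + 1 ≤ ((p - 2 : ℕ) : ℤ) + A'.card + B'.card := by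
    exact_mod_cast hDcard
  have h3 : ((p - 2 : ℕ) : ℤ) = (p : ℤ) - 2 := by omega
  rw [hAeq, hBeq, h3] at h2
  linarith
end

section
/- If n = 1 + q + q² for some prime power q, then the dihedral group D_{8n} of order 8n satisfies 4q + 3 ≤ Δ[D_{8n}] ≤ 4q + 4. -/
open Finset

set_option maxHeartbeats 1000000 in
set_option synthInstance.maxHeartbeats 400000 in
lemma exists_singer (q n : ℕ) (hq : IsPrimePow q) (hn : n = 1 + q + q ^ 2) :
    ∃ S : Finset (ZMod n), S.card ≤ q + 1 ∧
      ∀ d : ZMod n, ∃ a ∈ S, ∃ b ∈ S, a - b = d := by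
  classical
  obtain ⟨p, k, hp, hk, hqdef⟩ := hq
  haveI : Fact p.Prime := ⟨hp.nat_prime⟩
  have hq2 : 2 ≤ q := hqdef ▸ Nat.one_lt_pow (by omega) hp.nat_prime.two_le
  have hn0 : 0 < n := by omega
  haveI : NeZero n := ⟨by omega⟩
  set F := GaloisField p (3 * k) with hF
  haveI : Fintype F := Fintype.ofFinite F
  have hFcard : Nat.card F = q ^ 3 := by
    rw [GaloisField.card p (3 * k) (by omega), ← hqdef, ← pow_mul, mul_comm k 3]
  have h3 : q ^ 3 = (q - 1) * n + 1 := by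
    obtain ⟨m, rfl⟩ : ∃ m, q = m + 1 := ⟨q - 1, by omega⟩
    simp only [Nat.add_sub_cancel, hn]
    ring
  have hNn : Nat.card Fˣ = (q - 1) * n := by
    rw [Nat.card_units, hFcard, h3, Nat.add_sub_cancel]
  obtain ⟨g, hg⟩ := IsCyclic.exists_generator (α := Fˣ)
  have horder : orderOf g = (q - 1) * n := by
    rw [orderOf_eq_card_of_forall_mem_zpowers hg, hNn]
  have hex : ∀ x : Fˣ, ∃ m : ℕ, g ^ m = x := by
    intro x
    have h1 := hg x
    rw [← SetLike.mem_coe, ← powers_eq_zpowers, SetLike.mem_coe,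
      Submonoid.mem_powers_iff] at h1
    exact h1
  let e : Fˣ → ℕ := fun x => (hex x).choose
  have he : ∀ x, g ^ (e x) = x := fun x => (hex x).choose_spec
  let φ : Fˣ → ZMod n := fun x => ((e x : ℕ) : ZMod n)
  have hndvd : n ∣ (q - 1) * n := Dvd.intro_left _ rfl
  have hφpow : ∀ m : ℕ, φ (g ^ m) = (m : ZMod n) := by
    intro m
    have h1 : g ^ (e (g ^ m)) = g ^ m := he _
    rw [pow_eq_pow_iff_modEq, horder] at h1
    exact (ZMod.natCast_eq_natCast_iff _ _ _).mpr (h1.of_dvd hndvd)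
  have hφmul : ∀ x y : Fˣ, φ (x * y) = φ x + φ y := by
    intro x y
    conv_lhs => rw [← he x, ← he y, ← pow_add, hφpow]
    push_cast
    rfl
  have hφzero : ∀ x : Fˣ, φ x = 0 ↔ x ^ (q - 1) = 1 := by
    intro x
    have h2 : x ^ (q - 1) = 1 ↔ (q - 1) * n ∣ e x * (q - 1) := by
      conv_lhs => rw [← he x]
      rw [← pow_mul, ← orderOf_dvd_iff_pow_eq_one, horder]
    have h4 : (q - 1) * n ∣ e x * (q - 1) ↔ n ∣ e x := by
      rw [mul_comm (e x) (q - 1)]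
      exact Nat.mul_dvd_mul_iff_left (by omega : 0 < q - 1)
    rw [h2, h4]
    exact ZMod.natCast_eq_zero_iff _ _
  have hφd : ∀ d : ZMod n, φ (g ^ d.val) = d := by
    intro d
    rw [hφpow, ZMod.natCast_zmod_val]
  -- the subfield of q elements
  have hq0 : q ≠ 0 := by omega
  let K : Subfield F :=
    { carrier := {x : F | x ^ q = x}
      mul_mem' := fun {a b} ha hb => by
        simp only [Set.mem_setOf_eq] at *; rw [mul_pow, ha, hb]
      one_mem' := by simp
      add_mem' := fun {a b} ha hb => by
        simp only [Set.mem_setOf_eq, ← hqdef] at *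
        rw [add_pow_char_pow, ha, hb]
      zero_mem' := by simp [zero_pow hq0]
      neg_mem' := fun {a} ha => by
        simp only [Set.mem_setOf_eq, ← hqdef] at *
        rw [show (-a) = 0 - a by ring, sub_pow_char_pow, ha, zero_pow (by positivity), zero_sub]
      inv_mem' := fun a ha => by
        simp only [Set.mem_setOf_eq] at *; rw [inv_pow, ha] }
  have hKu : ∀ u : Fˣ, u ^ (q - 1) = 1 → (u : F) ∈ K := by
    intro u hu
    have h1 : (u : F) ^ (q - 1) = 1 := by
      have := congrArg (Units.val) hu
      push_cast at this
      exact this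
    show (u : F) ^ q = (u : F)
    calc (u : F) ^ q = (u : F) ^ (q - 1) * u := by
          rw [← pow_succ]; congr 1; omega
    _ = u := by rw [h1, one_mul]
  -- the kernel of φ
  set KER : Finset Fˣ := univ.filter (fun x => φ x = 0) with hKERdef
  have hKERcard : KER.card = q - 1 := by
    have himg : KER = (range (q - 1)).image (fun i => g ^ (n * i)) := by
      ext x
      simp only [hKERdef, mem_filter, mem_univ, true_and, mem_image, mem_range]
      constructor
      · intro hx
        obtain ⟨m, hm⟩ := (ZMod.natCast_eq_zero_iff _ _).mp hx
        refine ⟨m % (q - 1), Nat.mod_lt _ (by omega), ?_⟩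
        conv_rhs => rw [← he x, hm]
        rw [pow_eq_pow_iff_modEq, horder, mul_comm (q - 1) n]
        exact (Nat.mod_modEq m (q - 1)).mul_left' n
      · rintro ⟨i, hi, rfl⟩
        rw [hφpow]
        exact (ZMod.natCast_eq_zero_iff _ _).mpr ⟨i, rfl⟩
    rw [himg, card_image_of_injOn, card_range]
    intro i hi j hj hij
    simp only [mem_coe, mem_range] at hi hj
    rw [pow_eq_pow_iff_modEq, horder, mul_comm (q - 1) n] at hij
    have hlt1 : n * i < n * (q - 1) := Nat.mul_lt_mul_of_le_of_lt (le_refl n) hi hn0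
    have hlt2 : n * j < n * (q - 1) := Nat.mul_lt_mul_of_le_of_lt (le_refl n) hj hn0
    unfold Nat.ModEq at hij
    rw [Nat.mod_eq_of_lt hlt1, Nat.mod_eq_of_lt hlt2] at hij
    exact Nat.eq_of_mul_eq_mul_left hn0 hij
  -- cardinality of K
  have hKcard : Nat.card K = q := by
    have hmemiff : ∀ x : F, x ∈ K ↔ x ∈ insert (0 : F) (KER.image Units.val) := by
      intro x
      constructor
      · intro hx
        by_cases h0 : x = 0
        · exact Finset.mem_insert.mpr (Or.inl h0)
        · refine Finset.mem_insert.mpr (Or.inr (Finset.mem_image.mpr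
            ⟨Units.mk0 x h0, ?_, rfl⟩))
          rw [hKERdef, mem_filter]
          refine ⟨mem_univ _, ?_⟩
          rw [hφzero]
          have hxq : x ^ q = x := hx
          have hstep : x ^ (q - 1) * x = x := by
            rw [← pow_succ]
            rw [show q - 1 + 1 = q by omega]
            exact hxq
          have hx1 : x ^ (q - 1) = 1 := by
            have := mul_right_cancel₀ h0 (hstep.trans (one_mul x).symm)
            exact this
          ext
          push_cast
          exact hx1
      · intro hx
        rcases Finset.mem_insert.mp hx with rfl | hx2
        · exact K.zero_mem
        · obtain ⟨u, hu, rfl⟩ := Finset.mem_image.mp hx2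
          refine hKu u ?_
          rw [← hφzero]
          rw [hKERdef, mem_filter] at hu
          exact hu.2
    have hset : (K : Set F) = ↑(insert (0 : F) (KER.image Units.val)) :=
      Set.ext fun x => by rw [SetLike.mem_coe, Finset.mem_coe]; exact hmemiff x
    have h6 : Nat.card K = (K : Set F).ncard := Nat.card_coe_set_eq _
    have himg2 : (KER.image Units.val).card = q - 1 := by
      rw [card_image_of_injOn (fun a _ b _ hab => Units.ext hab), hKERcard]
    have h0nm : (0 : F) ∉ KER.image Units.val := by
      intro hmem
      obtain ⟨u, _, h⟩ := mem_image.mp hmem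
      exact u.ne_zero h
    rw [h6, hset, Set.ncard_coe_finset, card_insert_of_notMem h0nm, himg2]
    omega
  -- the dimension of F over K is 3
  haveI : Fintype K := Fintype.ofFinite K
  have hd3 : Module.finrank K F = 3 := by
    have hc := Module.card_eq_pow_finrank (K := K) (V := F)
    rw [← Nat.card_eq_fintype_card, ← Nat.card_eq_fintype_card, hFcard, hKcard] at hc
    exact (Nat.pow_right_injective hq2 hc.symm : _)
  -- a 2-dimensional subspace
  let b := Module.finBasis K F
  let f : Fin 2 → Fin (Module.finrank K F) :=
    Fin.castLE (by rw [hd3]; norm_num)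
  have hfinj : Function.Injective f := Fin.castLE_injective _
  have hli : LinearIndependent K (b ∘ f) := b.linearIndependent.comp f hfinj
  set W : Submodule K F := Submodule.span K (Set.range (b ∘ f)) with hWdef
  have hW2 : Module.finrank K W = 2 := by
    rw [hWdef, finrank_span_eq_card hli, Fintype.card_fin]
  have hWq : Nat.card W = q ^ 2 := by
    haveI : Fintype W := Fintype.ofFinite _
    have hc := Module.card_eq_pow_finrank (K := K) (V := W)
    rw [← Nat.card_eq_fintype_card, ← Nat.card_eq_fintype_card, hW2, hKcard] at hc
    exact hc
  -- key geometric step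
  have hkey : ∀ c : F, c ≠ 0 → ∃ x : F, x ∈ W ∧ x ≠ 0 ∧ c * x ∈ W := by
    intro c hc
    set f' := LinearMap.mulLeft K c with hf'def
    have hinj : Function.Injective f' := fun a b hab => by
      simp only [hf'def, LinearMap.mulLeft_apply] at hab
      exact mul_left_cancel₀ hc hab
    set W' := W.map f' with hW'def
    have hW'2 : Module.finrank K W' = 2 :=
      ((Submodule.equivMapOfInjective f' hinj W).finrank_eq).symm.trans hW2
    have hne : W' ⊓ W ≠ ⊥ := by
      intro hbot
      have h1 := Submodule.finrank_sup_add_finrank_inf_eq W' W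
      rw [hbot, finrank_bot, add_zero, hW2, hW'2] at h1
      have h2 : Module.finrank K ↥(W' ⊔ W) ≤ Module.finrank K F := Submodule.finrank_le _
      rw [hd3] at h2
      omega
    obtain ⟨z, hz, hz0⟩ := (Submodule.ne_bot_iff _).mp hne
    obtain ⟨hzW', hzW⟩ := Submodule.mem_inf.mp hz
    obtain ⟨x, hxW, hxz⟩ := Submodule.mem_map.mp hzW'
    have hcx : c * x = z := hxz
    refine ⟨x, hxW, fun h => hz0 (by rw [← hcx, h, mul_zero]), by rw [hcx]; exact hzW⟩
  -- the Singer set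
  set SU : Finset Fˣ := univ.filter (fun u => (u : F) ∈ W) with hSUdef
  set S : Finset (ZMod n) := SU.image φ with hSdef
  have hcover : ∀ d : ZMod n, ∃ a ∈ S, ∃ bb ∈ S, a - bb = d := by
    intro d
    set c : Fˣ := g ^ d.val with hcdef
    obtain ⟨x, hxW, hx0, hcx⟩ := hkey (c : F) (Units.ne_zero c)
    set xu : Fˣ := Units.mk0 x hx0 with hxudef
    have h1 : ((c * xu : Fˣ) : F) ∈ W := by
      simpa [hxudef] using hcx
    refine ⟨φ (c * xu), mem_image_of_mem _ (mem_filter.mpr ⟨mem_univ _, h1⟩),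
      φ xu, mem_image_of_mem _ (mem_filter.mpr ⟨mem_univ _, by simpa [hxudef] using hxW⟩), ?_⟩
    rw [hφmul, hcdef, hφd, add_sub_cancel_right]
  have hSUcard : SU.card = q ^ 2 - 1 := by
    have hWall : (univ.filter (fun x : F => x ∈ W)).card = q ^ 2 := by
      rw [← hWq, Nat.card_eq_fintype_card, Fintype.card_subtype]
    have hbij : SU.card = ((univ.filter (fun x : F => x ∈ W)).erase 0).card := by
      refine card_bij (fun u _ => (u : F)) ?_ ?_ ?_
      · intro u hu
        simp only [hSUdef, mem_filter, mem_univ, true_and] at hu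
        exact mem_erase.mpr ⟨u.ne_zero, mem_filter.mpr ⟨mem_univ _, hu⟩⟩
      · intro u _ v _ huv
        exact Units.ext huv
      · intro x hx
        rw [mem_erase, mem_filter] at hx
        exact ⟨Units.mk0 x hx.1, mem_filter.mpr ⟨mem_univ _, hx.2.2⟩, rfl⟩
    rw [hbij, card_erase_of_mem, hWall]
    exact mem_filter.mpr ⟨mem_univ _, W.zero_mem⟩
  have hfib : ∀ s ∈ S, q - 1 ≤ (SU.filter (fun u => φ u = s)).card := by
    intro s hs
    obtain ⟨u0, hu0, rfl⟩ := mem_image.mp hs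
    have hsub : KER.image (fun v => v * u0) ⊆ SU.filter (fun u => φ u = φ u0) := by
      intro w hw
      obtain ⟨v, hv, rfl⟩ := mem_image.mp hw
      have hv0 : φ v = 0 := by simpa [hKERdef] using hv
      have hvK : (v : F) ∈ K := hKu v ((hφzero v).mp hv0)
      have hu0W : (u0 : F) ∈ W := by simpa [hSUdef] using hu0
      have hmemW : ((v * u0 : Fˣ) : F) ∈ W := by
        have hsm := W.smul_mem (⟨(v : F), hvK⟩ : K) hu0W
        have heq : (⟨(v : F), hvK⟩ : K) • ((u0 : Fˣ) : F) = ((v * u0 : Fˣ) : F) := rfl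
        rwa [heq] at hsm
      refine mem_filter.mpr ⟨mem_filter.mpr ⟨mem_univ _, hmemW⟩, ?_⟩
      rw [hφmul, hv0, zero_add]
    calc q - 1 = KER.card := hKERcard.symm
    _ = (KER.image (fun v => v * u0)).card :=
        (card_image_of_injective _ (fun a b hab => by
          exact mul_right_cancel hab)).symm
    _ ≤ _ := card_le_card hsub
  have hsum : SU.card = ∑ s ∈ S, (SU.filter (fun u => φ u = s)).card :=
    card_eq_sum_card_fiberwise (fun u hu => mem_image_of_mem _ hu)
  have hSle : (q - 1) * S.card ≤ q ^ 2 - 1 := by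
    rw [← hSUcard, hsum]
    calc (q - 1) * S.card = ∑ _s ∈ S, (q - 1) := by
          rw [sum_const, smul_eq_mul, mul_comm]
    _ ≤ _ := sum_le_sum hfib
  have hq1 : q ^ 2 - 1 = (q - 1) * (q + 1) := by
    obtain ⟨m, rfl⟩ : ∃ m, q = m + 1 := ⟨q - 1, by omega⟩
    simp only [Nat.add_sub_cancel]
    have : (m + 1) ^ 2 = m * (m + 1 + 1) + 1 := by ring
    omega
  have hScard : S.card ≤ q + 1 := by
    rw [hq1] at hSle
    exact Nat.le_of_mul_le_mul_left hSle (by omega)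
  exact ⟨S, hScard, hcover⟩

set_option maxHeartbeats 1000000 in
theorem stmt16 (q n : ℕ) (hq : IsPrimePow q) (hn : n = 1 + q + q ^ 2) :
    4 * q + 3 ≤ diffSize (DihedralGroup (4 * n)) ∧
    diffSize (DihedralGroup (4 * n)) ≤ 4 * q + 4 := by
  classical
  have hq2 : 2 ≤ q := hq.two_le
  have hn0 : 0 < n := by omega
  haveI : NeZero (4 * n) := ⟨by omega⟩
  haveI : NeZero n := ⟨by omega⟩
  obtain ⟨S, hScard, hcover⟩ := exists_singer q n hq hn
  set ι : ZMod n → ZMod (4 * n) := fun a => ((4 * a.val : ℕ) : ZMod (4 * n)) with hι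
  have hcore : ∀ u : ℕ, u < n →
      ∃ a ∈ S, ∃ b ∈ S, ι a - ι b = ((4 * u : ℕ) : ZMod (4 * n)) := by
    intro u hu
    obtain ⟨a, ha, b, hb, hab⟩ := hcover ((u : ℕ) : ZMod n)
    refine ⟨a, ha, b, hb, ?_⟩
    have h1 : (a.val : ZMod n) = ((b.val + u : ℕ) : ZMod n) := by
      push_cast
      rw [ZMod.natCast_zmod_val, ZMod.natCast_zmod_val, ← hab]
      ring
    have h2 : a.val ≡ b.val + u [MOD n] := (ZMod.natCast_eq_natCast_iff _ _ _).mp h1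
    have h3 : 4 * a.val ≡ 4 * (b.val + u) [MOD 4 * n] := h2.mul_left' 4
    have h4 : ((4 * a.val : ℕ) : ZMod (4 * n)) = ((4 * (b.val + u) : ℕ) : ZMod (4 * n)) :=
      (ZMod.natCast_eq_natCast_iff _ _ _).mpr h3
    show ((4 * a.val : ℕ) : ZMod (4 * n)) - ((4 * b.val : ℕ) : ZMod (4 * n)) = _
    rw [h4]
    push_cast
    ring
  set R : Finset (ZMod (4 * n)) := S.image ι ∪ S.image (fun a => ι a + 1) with hR
  set T : Finset (ZMod (4 * n)) := S.image ι ∪ S.image (fun a => ι a + 2) with hT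
  have hmemR1 : ∀ a ∈ S, ι a ∈ R := fun a ha =>
    mem_union_left _ (mem_image_of_mem _ ha)
  have hmemR2 : ∀ a ∈ S, ι a + 1 ∈ R := fun a ha =>
    mem_union_right _ (mem_image_of_mem _ ha)
  have hmemT1 : ∀ a ∈ S, ι a ∈ T := fun a ha =>
    mem_union_left _ (mem_image_of_mem _ ha)
  have hmemT2 : ∀ a ∈ S, ι a + 2 ∈ T := fun a ha =>
    mem_union_right _ (mem_image_of_mem _ ha)
  -- decompose an arbitrary element of ZMod (4n)
  have hdec : ∀ k : ZMod (4 * n), ∃ u : ℕ, ∃ m : ℕ, u < n ∧ m < 4 ∧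
      k = ((4 * u + m : ℕ) : ZMod (4 * n)) := by
    intro k
    refine ⟨k.val / 4, k.val % 4, ?_, ?_, ?_⟩
    · have := ZMod.val_lt k; omega
    · omega
    · rw [show 4 * (k.val / 4) + k.val % 4 = k.val from by omega, ZMod.natCast_zmod_val]
  -- a variant of hcore for shifted u
  have hcore' : ∀ u : ℕ, u < n →
      ∃ a ∈ S, ∃ b ∈ S, ι a - ι b = ((4 * (u + 1) : ℕ) : ZMod (4 * n)) := by
    intro u hu
    obtain ⟨a, ha, b, hb, hab⟩ := hcore ((u + 1) % n) (Nat.mod_lt _ hn0)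
    refine ⟨a, ha, b, hb, ?_⟩
    rw [hab]
    exact (ZMod.natCast_eq_natCast_iff _ _ _).mpr (((Nat.mod_modEq (u + 1) n)).mul_left' 4)
  have hrefl : ∀ k : ZMod (4 * n), ∃ t ∈ T, ∃ r ∈ R, t - r = k := by
    intro k
    obtain ⟨u, m, hu, hm, hk⟩ := hdec k
    have hm4 : m = 0 ∨ m = 1 ∨ m = 2 ∨ m = 3 := by omega
    rcases hm4 with rfl | rfl | rfl | rfl
    · obtain ⟨a, ha, b, hb, hab⟩ := hcore u hu
      exact ⟨ι a, hmemT1 a ha, ι b, hmemR1 b hb, by rw [hab, hk]; norm_num⟩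
    · obtain ⟨a, ha, b, hb, hab⟩ := hcore u hu
      refine ⟨ι a + 2, hmemT2 a ha, ι b + 1, hmemR2 b hb, ?_⟩
      rw [hk, show ι a + 2 - (ι b + 1) = (ι a - ι b) + 1 by ring, hab]
      push_cast; ring
    · obtain ⟨a, ha, b, hb, hab⟩ := hcore u hu
      refine ⟨ι a + 2, hmemT2 a ha, ι b, hmemR1 b hb, ?_⟩
      rw [hk, show ι a + 2 - ι b = (ι a - ι b) + 2 by ring, hab]
      push_cast; ring
    · obtain ⟨a, ha, b, hb, hab⟩ := hcore' u hu
      refine ⟨ι a, hmemT1 a ha, ι b + 1, hmemR2 b hb, ?_⟩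
      rw [hk, show ι a - (ι b + 1) = (ι a - ι b) - 1 by ring, hab]
      push_cast; ring
  have hrot : ∀ k : ZMod (4 * n),
      (∃ i ∈ R, ∃ j ∈ R, i - j = k) ∨ (∃ i ∈ T, ∃ j ∈ T, i - j = k) := by
    intro k
    obtain ⟨u, m, hu, hm, hk⟩ := hdec k
    have hm4 : m = 0 ∨ m = 1 ∨ m = 2 ∨ m = 3 := by omega
    rcases hm4 with rfl | rfl | rfl | rfl
    · obtain ⟨a, ha, b, hb, hab⟩ := hcore u hu
      exact Or.inl ⟨ι a, hmemR1 a ha, ι b, hmemR1 b hb, by rw [hab, hk]; norm_num⟩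
    · obtain ⟨a, ha, b, hb, hab⟩ := hcore u hu
      refine Or.inl ⟨ι a + 1, hmemR2 a ha, ι b, hmemR1 b hb, ?_⟩
      rw [hk, show ι a + 1 - ι b = (ι a - ι b) + 1 by ring, hab]
      push_cast; ring
    · obtain ⟨a, ha, b, hb, hab⟩ := hcore u hu
      refine Or.inr ⟨ι a + 2, hmemT2 a ha, ι b, hmemT1 b hb, ?_⟩
      rw [hk, show ι a + 2 - ι b = (ι a - ι b) + 2 by ring, hab]
      push_cast; ring
    · obtain ⟨a, ha, b, hb, hab⟩ := hcore' u hu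
      refine Or.inl ⟨ι a, hmemR1 a ha, ι b + 1, hmemR2 b hb, ?_⟩
      rw [hk, show ι a - (ι b + 1) = (ι a - ι b) - 1 by ring, hab]
      push_cast; ring
  -- the difference basis
  set B : Finset (DihedralGroup (4 * n)) :=
    R.image DihedralGroup.r ∪ T.image DihedralGroup.sr with hB
  have hBbasis : IsDiffBasis B := by
    intro g
    cases g with
    | r i =>
      rcases hrot i with ⟨x, hx, y, hy, hxy⟩ | ⟨x, hx, y, hy, hxy⟩
      · refine ⟨DihedralGroup.r x, mem_union_left _ (mem_image_of_mem _ hx),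
          DihedralGroup.r y, mem_union_left _ (mem_image_of_mem _ hy), ?_⟩
        rw [eq_mul_inv_iff_mul_eq, DihedralGroup.r_mul_r]
        rw [← hxy]; ring_nf
      · refine ⟨DihedralGroup.sr y, mem_union_right _ (mem_image_of_mem _ hy),
          DihedralGroup.sr x, mem_union_right _ (mem_image_of_mem _ hx), ?_⟩
        rw [eq_mul_inv_iff_mul_eq, DihedralGroup.r_mul_sr]
        congr 1
        rw [← hxy]; ring
    | sr i =>
      obtain ⟨t, ht, r', hr', htr⟩ := hrefl i
      refine ⟨DihedralGroup.sr t, mem_union_right _ (mem_image_of_mem _ ht),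
        DihedralGroup.r r', mem_union_left _ (mem_image_of_mem _ hr'), ?_⟩
      rw [eq_mul_inv_iff_mul_eq, DihedralGroup.sr_mul_r]
      congr 1
      rw [← htr]; ring
  have hBcard : B.card ≤ 4 * q + 4 := by
    have h1 : R.card ≤ S.card + S.card :=
      le_trans (card_union_le _ _) (add_le_add card_image_le card_image_le)
    have h2 : T.card ≤ S.card + S.card :=
      le_trans (card_union_le _ _) (add_le_add card_image_le card_image_le)
    calc B.card ≤ (R.image DihedralGroup.r).card + (T.image DihedralGroup.sr).card :=
          card_union_le _ _
    _ ≤ R.card + T.card := add_le_add card_image_le card_image_le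
    _ ≤ 4 * q + 4 := by omega
  have hub : diffSize (DihedralGroup (4 * n)) ≤ 4 * q + 4 :=
    le_trans (Nat.sInf_le ⟨B, rfl, hBbasis⟩) hBcard
  -- lower bound
  have hne : {k | ∃ B : Finset (DihedralGroup (4 * n)), B.card = k ∧ IsDiffBasis B}.Nonempty :=
    ⟨(univ : Finset (DihedralGroup (4 * n))).card, univ, rfl,
      fun g => ⟨g, mem_univ _, 1, mem_univ _, by rw [inv_one, mul_one]⟩⟩
  obtain ⟨B₀, hB₀card, hB₀⟩ := Nat.sInf_mem hne
  set R' : Finset (ZMod (4 * n)) :=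
    univ.filter (fun i => DihedralGroup.r i ∈ B₀) with hR'
  set T' : Finset (ZMod (4 * n)) :=
    univ.filter (fun i => DihedralGroup.sr i ∈ B₀) with hT'
  have hwit : ∀ k : ZMod (4 * n), ∃ ij : ZMod (4 * n) × ZMod (4 * n),
      ij.1 ∈ R' ∧ ij.2 ∈ T' ∧ ij.2 - ij.1 = k := by
    intro k
    obtain ⟨a, ha, b, hb, hab⟩ := hB₀ (DihedralGroup.sr k)
    cases a with
    | r i =>
      cases b with
      | r j => rw [show (DihedralGroup.r j)⁻¹ = DihedralGroup.r (-j) from rfl,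
          DihedralGroup.r_mul_r] at hab; exact absurd hab (by simp)
      | sr j =>
        rw [show (DihedralGroup.sr j)⁻¹ = DihedralGroup.sr j from rfl,
          DihedralGroup.r_mul_sr] at hab
        refine ⟨(i, j), mem_filter.mpr ⟨mem_univ _, ha⟩,
          mem_filter.mpr ⟨mem_univ _, hb⟩, ?_⟩
        have : k = j - i := by injection hab
        rw [this]
    | sr i =>
      cases b with
      | r j =>
        rw [show (DihedralGroup.r j)⁻¹ = DihedralGroup.r (-j) from rfl,
          DihedralGroup.sr_mul_r] at hab
        refine ⟨(j, i), mem_filter.mpr ⟨mem_univ _, hb⟩,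
          mem_filter.mpr ⟨mem_univ _, ha⟩, ?_⟩
        have : k = i + -j := by injection hab
        rw [this]; ring
      | sr j => rw [show (DihedralGroup.sr j)⁻¹ = DihedralGroup.sr j from rfl,
          DihedralGroup.sr_mul_sr] at hab; exact absurd hab (by simp)
  choose fw hfw1 hfw2 hfw3 using hwit
  have hfwinj : Function.Injective fw := by
    intro k k' hkk'
    rw [← hfw3 k, ← hfw3 k', hkk']
  have hcard1 : 4 * n ≤ R'.card * T'.card := by
    calc 4 * n = Fintype.card (ZMod (4 * n)) := (ZMod.card _).symm
    _ = (univ : Finset (ZMod (4 * n))).card := card_univ.symm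
    _ ≤ (R' ×ˢ T').card := by
        apply card_le_card_of_injOn fw
        · intro k _
          exact mem_product.mpr ⟨hfw1 k, hfw2 k⟩
        · exact hfwinj.injOn
    _ = R'.card * T'.card := card_product _ _
  have hrinj : Function.Injective (DihedralGroup.r (n := 4 * n)) := by
    intro i j h; injection h
  have hsrinj : Function.Injective (DihedralGroup.sr (n := 4 * n)) := by
    intro i j h; injection h
  have hcard2 : R'.card + T'.card ≤ B₀.card := by
    have hdisj : Disjoint (R'.image DihedralGroup.r) (T'.image DihedralGroup.sr) := by
      rw [disjoint_left]
      intro x hx hx'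
      obtain ⟨i, _, rfl⟩ := mem_image.mp hx
      obtain ⟨j, _, hj⟩ := mem_image.mp hx'
      exact absurd hj (by simp)
    have hsub : R'.image DihedralGroup.r ∪ T'.image DihedralGroup.sr ⊆ B₀ := by
      intro x hx
      rcases mem_union.mp hx with hx | hx
      · obtain ⟨i, hi, rfl⟩ := mem_image.mp hx
        exact (mem_filter.mp hi).2
      · obtain ⟨i, hi, rfl⟩ := mem_image.mp hx
        exact (mem_filter.mp hi).2
    calc R'.card + T'.card
        = (R'.image DihedralGroup.r).card + (T'.image DihedralGroup.sr).card := by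
          rw [card_image_of_injective _ hrinj, card_image_of_injective _ hsrinj]
    _ = (R'.image DihedralGroup.r ∪ T'.image DihedralGroup.sr).card :=
          (card_union_of_disjoint hdisj).symm
    _ ≤ B₀.card := card_le_card hsub
  have hlb : 4 * q + 3 ≤ B₀.card := by
    by_contra hcon
    push_neg at hcon
    have h16 : 16 * n ≤ (R'.card + T'.card) * (R'.card + T'.card) := by
      nlinarith [sq_nonneg (R'.card - T'.card : ℤ), hcard1]
    have h17 : 16 * n ≤ B₀.card * B₀.card :=
      le_trans h16 (Nat.mul_le_mul hcard2 hcard2)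
    have : 16 * n = 16 + 16 * q + 16 * q ^ 2 := by omega
    nlinarith [h17, hcon, hq2]
  refine ⟨?_, hub⟩
  have : diffSize (DihedralGroup (4 * n)) =
      sInf {k | ∃ B : Finset (DihedralGroup (4 * n)), B.card = k ∧ IsDiffBasis B} := rfl
  rw [this, ← hB₀card]
  exact hlb
end
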